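/- arXiv:2510.05395 — 9 statements merged into one kernel-verified Lean document; each statement's English description precedes it below -/
import Mathlib

section
/- If μ is a probability measure on the unit circle 𝕋 with vanishing first moment (∫_𝕋 λ dμ(λ) = 0) and μ has a point mass at some λ₀ ∈ 𝕋 with μ({λ₀}) ≥ 1/2, then μ = (1/2)(δ_{λ₀} + δ_{-λ₀}). -/
open MeasureTheory Complex

theorem stmt_0 (μ : Measure ℂ) [IsProbabilityMeasure μ]
    (hcirc : μ {z : ℂ | ‖z‖ = 1}ᶜ = 0)
    (hmoment : ∫ z, z ∂μ = 0)
    (l₀ : ℂ) (hl₀ : ‖l₀‖ = 1)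
    (hatom : (1/2 : ENNReal) ≤ μ {l₀}) :
    μ = (1/2 : ENNReal) • (Measure.dirac l₀ + Measure.dirac (-l₀)) := by
  have hae : ∀ᵐ z ∂μ, ‖z‖ = 1 := by
    rw [ae_iff]; exact hcirc
  set ν := μ.restrict {l₀}ᶜ with hν
  have hνae : ∀ᵐ z ∂ν, ‖z‖ = 1 := ae_restrict_of_ae hae
  have hfin : μ {l₀} ≠ ⊤ := (measure_lt_top μ _).ne
  have hdecomp : μ = μ {l₀} • Measure.dirac l₀ + ν := by
    conv_lhs => rw [← Measure.restrict_add_restrict_compl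
      (μ := μ) (measurableSet_singleton l₀)]
    rw [Measure.restrict_singleton]
  have hint : Integrable (fun z : ℂ => z) μ := by
    refine (integrable_const (1:ℝ)).mono' measurable_id.aestronglyMeasurable ?_
    filter_upwards [hae] with z hz
    simp [hz]
  have hintν : Integrable (fun z : ℂ => z) ν := hint.restrict
  have h1 : ∫ z, z ∂μ = ∫ z, z ∂(μ.restrict {l₀}) + ∫ z, z ∂ν := by
    rw [← integral_add_measure hint.restrict hint.restrict,
      Measure.restrict_add_restrict_compl (measurableSet_singleton l₀)]
  have h2 : ∫ z, z ∂(μ.restrict {l₀}) = (μ {l₀}).toReal • l₀ := by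
    rw [Measure.restrict_singleton, integral_smul_measure, integral_dirac]
  set r : ℝ := (μ {l₀}).toReal with hrdef
  have hr_half : (1/2 : ℝ) ≤ r := by
    have := ENNReal.toReal_mono hfin hatom
    simpa using this
  have hνuniv : ν Set.univ = 1 - μ {l₀} := by
    rw [hν, Measure.restrict_apply_univ, measure_compl (measurableSet_singleton l₀) hfin,
      measure_univ]
  have hμle1 : μ {l₀} ≤ 1 := prob_le_one
  have hνunivR : (ν Set.univ).toReal = 1 - r := by
    rw [hνuniv, ENNReal.toReal_sub_of_le hμle1 ENNReal.one_ne_top]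
    simp [hrdef]
  have hI : ∫ z, z ∂ν = -(r • l₀) := by
    have := hmoment
    rw [h1, h2] at this
    exact eq_neg_of_add_eq_zero_right this
  -- norm bound gives r ≤ 1 - r
  have hbound : r ≤ 1 - r := by
    have h3 : ‖∫ z, z ∂ν‖ ≤ ∫ z, ‖z‖ ∂ν := norm_integral_le_integral_norm _
    have h4 : ∫ z, ‖z‖ ∂ν ≤ ∫ _z, (1:ℝ) ∂ν := by
      refine integral_mono_ae hintν.norm (integrable_const 1) ?_
      filter_upwards [hνae] with z hz
      simp [hz]
    have h5 : ∫ _z, (1:ℝ) ∂ν = 1 - r := by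
      rw [integral_const, measureReal_def, hνunivR]; simp
    have h6 : ‖∫ z, z ∂ν‖ = r := by
      rw [hI]
      have hr0 : 0 ≤ r := ENNReal.toReal_nonneg
      rw [norm_neg, norm_smul, hl₀]
      simp [Real.norm_eq_abs, _root_.abs_of_nonneg hr0]
    linarith [h3.trans (h4.trans_eq h5), h6 ▸ h3]
  have hr : r = 1/2 := by linarith
  have hμl : μ {l₀} = 1/2 := by
    have : (μ {l₀}).toReal = ((1:ENNReal)/2).toReal := by
      rw [← hrdef, hr]; simp
    exact (ENNReal.toReal_eq_toReal_iff' hfin (by simp)).1 this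
  -- equality case
  have hIval : ∫ z, z ∂ν = -((1/2 : ℝ) • l₀) := by rw [hI, hr]
  have hintre : Integrable (fun z : ℂ => ((starRingEnd ℂ) l₀ * z).re) ν :=
    (hintν.const_mul ((starRingEnd ℂ) l₀)).re
  have hreint : ∫ z, ((starRingEnd ℂ) l₀ * z).re ∂ν = -(1/2 : ℝ) := by
    have hcalc : ∫ z, ((starRingEnd ℂ) l₀ * z).re ∂ν
        = ((starRingEnd ℂ) l₀ * ∫ z, z ∂ν).re := by
      rw [← integral_const_mul]
      exact integral_re (hintν.const_mul _)
    rw [hcalc, hIval]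
    have : (starRingEnd ℂ) l₀ * -((1/2:ℝ) • l₀) = -((1/2:ℝ) • ((starRingEnd ℂ) l₀ * l₀)) := by
      rw [mul_neg, mul_smul_comm]
    rw [this]
    have hnsq : (starRingEnd ℂ) l₀ * l₀ = 1 := by
      rw [mul_comm, Complex.mul_conj]
      norm_cast
      rw [Complex.normSq_eq_norm_sq, hl₀]; norm_num
    rw [hnsq]
    simp
  have hg : ∀ᵐ z ∂ν, (1 : ℝ) + ((starRingEnd ℂ) l₀ * z).re = 0 := by
    have hgint : Integrable (fun z : ℂ => 1 + ((starRingEnd ℂ) l₀ * z).re) ν :=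
      (integrable_const 1).add hintre
    have hgnn : 0 ≤ᵐ[ν] fun z : ℂ => 1 + ((starRingEnd ℂ) l₀ * z).re := by
      filter_upwards [hνae] with z hz
      have h7 : |((starRingEnd ℂ) l₀ * z).re| ≤ ‖(starRingEnd ℂ) l₀ * z‖ :=
        Complex.abs_re_le_norm _
      rw [norm_mul, Complex.norm_conj, hl₀, hz, one_mul] at h7
      have := abs_le.1 h7
      simp only [Pi.zero_apply]
      linarith [this.1]
    have hgz : ∫ z, (1 + ((starRingEnd ℂ) l₀ * z).re) ∂ν = 0 := by
      rw [integral_add (integrable_const 1) hintre, integral_const, measureReal_def, hνunivR, hreint, hr]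
      norm_num
    exact ((integral_eq_zero_iff_of_nonneg_ae hgnn hgint).1 hgz)
  have hzeq : ∀ᵐ z ∂ν, z = -l₀ := by
    filter_upwards [hg, hνae] with z hz habs
    have hre : ((starRingEnd ℂ) l₀ * z).re = -1 := by linarith
    have habsw : ‖(starRingEnd ℂ) l₀ * z‖ = 1 := by
      rw [norm_mul, Complex.norm_conj, hl₀, habs, one_mul]
    have him : ((starRingEnd ℂ) l₀ * z).im = 0 := by
      have := Complex.sq_norm ((starRingEnd ℂ) l₀ * z)
      rw [habsw, Complex.normSq_apply, hre] at this
      nlinarith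
    have hw : (starRingEnd ℂ) l₀ * z = -1 := by
      apply Complex.ext <;> simp [hre, him]
    have hnsq : l₀ * (starRingEnd ℂ) l₀ = 1 := by
      rw [Complex.mul_conj]
      norm_cast
      rw [Complex.normSq_eq_norm_sq, hl₀]; norm_num
    calc z = (l₀ * (starRingEnd ℂ) l₀) * z := by rw [hnsq, one_mul]
    _ = l₀ * ((starRingEnd ℂ) l₀ * z) := by ring
    _ = -l₀ := by rw [hw]; ring
  have hνc : ν {-l₀}ᶜ = 0 := by
    have := ae_iff.1 hzeq
    exact this
  have hνeq : ν = (1/2 : ENNReal) • Measure.dirac (-l₀) := by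
    have hres : ν = ν.restrict {-l₀} + ν.restrict {-l₀}ᶜ :=
      (Measure.restrict_add_restrict_compl (measurableSet_singleton (-l₀))).symm
    have hz : ν.restrict {-l₀}ᶜ = 0 := by
      rw [Measure.restrict_eq_zero]; exact hνc
    have hνm : ν {-l₀} = 1/2 := by
      have h8 : ν {-l₀} = ν Set.univ := by
        rw [← measure_add_measure_compl (measurableSet_singleton (-l₀)), hνc, add_zero]
      rw [h8, hνuniv, hμl]
      apply ENNReal.sub_eq_of_eq_add (by norm_num)
      rw [ENNReal.div_add_div_same]
      norm_num
      rw [ENNReal.div_self] <;> norm_num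
    rw [hres, hz, add_zero, Measure.restrict_singleton, hνm]
  rw [hdecomp, hμl, hνeq, smul_add]
end

section
/- For α ∈ (0,1) and 0 < p, the function z ↦ (1-z)^{-(1+α)}(1+z)^{-(1-α)} on the unit disk belongs to the Hardy space H^p if and only if p < 1/(1+α). -/
open Complex Real MeasureTheory

/-- Membership in the Hardy space `H^p` of the unit disk. -/
def InHardy (p : ℝ) (f : ℂ → ℂ) : Prop :=
  DifferentiableOn ℂ f (Metric.ball 0 1) ∧
  ∃ C : ℝ, ∀ r : ℝ, 0 ≤ r → r < 1 →
    (∫ θ in (0:ℝ)..(2 * Real.pi),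
      (‖f ((r:ℂ) * Complex.exp (θ * Complex.I))‖) ^ p) ≤ C

set_option maxHeartbeats 1000000


lemma sq_abs_one_sub (r θ : ℝ) :
    ‖1 - (r:ℂ) * Complex.exp ((θ:ℂ) * Complex.I)‖ ^ 2
      = 1 - 2*r*Real.cos θ + r^2 := by
  rw [Complex.sq_norm, Complex.normSq_apply]
  simp [Complex.exp_mul_I, Complex.cos_ofReal_re, Complex.sin_ofReal_re]
  nlinarith [Real.sin_sq_add_cos_sq θ]

lemma sq_abs_one_add (r θ : ℝ) :
    ‖1 + (r:ℂ) * Complex.exp ((θ:ℂ) * Complex.I)‖ ^ 2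
      = 1 + 2*r*Real.cos θ + r^2 := by
  rw [Complex.sq_norm, Complex.normSq_apply]
  simp [Complex.exp_mul_I, Complex.cos_ofReal_re, Complex.sin_ofReal_re]
  nlinarith [Real.sin_sq_add_cos_sq θ]

lemma abs_f_eq (α p : ℝ) (z : ℂ) :
    ‖(1 - z) ^ (-(1 + (α:ℂ))) * (1 + z) ^ (-(1 - (α:ℂ)))‖ ^ p
      = ‖1 - z‖ ^ (-((1+α)*p)) * ‖1 + z‖ ^ (-((1-α)*p)) := by
  have e1 : (-(1 + (α:ℂ))) = ((-(1+α) : ℝ) : ℂ) := by push_cast; ring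
  have e2 : (-(1 - (α:ℂ))) = ((-(1-α) : ℝ) : ℂ) := by push_cast; ring
  rw [norm_mul, e1, e2, Complex.norm_cpow_real, Complex.norm_cpow_real,
    Real.mul_rpow (Real.rpow_nonneg (norm_nonneg _) _) (Real.rpow_nonneg (norm_nonneg _) _),
    ← Real.rpow_mul (norm_nonneg _), ← Real.rpow_mul (norm_nonneg _)]
  ring_nf


lemma abs_z (r θ : ℝ) (hr0 : 0 ≤ r) :
    ‖(r:ℂ) * Complex.exp ((θ:ℂ) * Complex.I)‖ = r := by
  rw [norm_mul, Complex.norm_exp_ofReal_mul_I, Complex.norm_real, Real.norm_eq_abs, _root_.abs_of_nonneg hr0, mul_one]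

lemma one_sub_pos (r θ : ℝ) (hr0 : 0 ≤ r) (hr1 : r < 1) :
    0 < ‖1 - (r:ℂ) * Complex.exp ((θ:ℂ) * Complex.I)‖ := by
  rw [norm_pos_iff, sub_ne_zero]
  intro h
  have := abs_z r θ hr0
  rw [← h, norm_one] at this
  linarith

lemma one_add_pos (r θ : ℝ) (hr0 : 0 ≤ r) (hr1 : r < 1) :
    0 < ‖1 + (r:ℂ) * Complex.exp ((θ:ℂ) * Complex.I)‖ := by
  rw [norm_pos_iff]
  intro h
  have h' : (r:ℂ) * Complex.exp ((θ:ℂ) * Complex.I) = -1 := by linear_combination h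
  have := abs_z r θ hr0
  rw [h'] at this
  simp at this
  linarith

lemma II_abs_rpow {s : ℝ} (hs : -1 < s) (a b : ℝ) :
    IntervalIntegrable (fun x : ℝ => |x| ^ s) volume a b := by
  have h : ∀ c : ℝ, IntervalIntegrable (fun x : ℝ => |x| ^ s) volume 0 c := by
    intro c
    rcases le_total 0 c with hc | hc
    · rw [intervalIntegrable_iff, Set.uIoc_of_le hc]
      rw [MeasureTheory.integrableOn_congr_fun
        (g := fun x : ℝ => x ^ s) (fun x hx => by rw [_root_.abs_of_nonneg (le_of_lt hx.1)])
        measurableSet_Ioc]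
      have := intervalIntegral.intervalIntegrable_rpow' (a := 0) (b := c) hs
      rwa [intervalIntegrable_iff, Set.uIoc_of_le hc] at this
    · rw [intervalIntegrable_iff, Set.uIoc_of_ge hc]
      rw [MeasureTheory.integrableOn_congr_fun
        (g := fun x : ℝ => (-x) ^ s) (fun x hx => by rw [abs_of_nonpos (hx.2)])
        measurableSet_Ioc]
      have := intervalIntegral.intervalIntegrable_rpow' (a := 0) (b := -c) hs
      have := ((IntervalIntegrable.iff_comp_neg (by simp)).mp this)
      simp only [neg_zero, neg_neg] at this
      rwa [intervalIntegrable_iff, Set.uIoc_of_ge hc] at this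
  exact (h a).symm.trans (h b)


lemma cont_z (r : ℝ) : Continuous fun θ : ℝ => (r:ℂ) * Complex.exp ((θ:ℂ) * Complex.I) :=
  continuous_const.mul <| Complex.continuous_exp.comp (Complex.continuous_ofReal.mul continuous_const)

lemma cont_F (a b r : ℝ) (hr0 : 0 ≤ r) (hr1 : r < 1) :
    Continuous fun θ : ℝ =>
      ‖1 - (r:ℂ) * Complex.exp ((θ:ℂ) * Complex.I)‖ ^ (-a) *
        ‖1 + (r:ℂ) * Complex.exp ((θ:ℂ) * Complex.I)‖ ^ (-b) := by
  apply Continuous.mul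
  · exact Continuous.rpow_const (continuous_norm.comp (continuous_const.sub (cont_z r)))
      fun θ => Or.inl (one_sub_pos r θ hr0 hr1).ne'
  · exact Continuous.rpow_const (continuous_norm.comp (continuous_const.add (cont_z r)))
      fun θ => Or.inl (one_add_pos r θ hr0 hr1).ne'


-- helper: A ≥ m > 0  and  -s ≤ 0, s ≤ 1, then A^(-s) ≤ (K)*(m')^(-s) style steps
lemma rpow_neg_le_of_le {A m s : ℝ} (hm : 0 < m) (hle : m ≤ A) (hs : 0 ≤ s) :
    A ^ (-s) ≤ m ^ (-s) :=
  Real.rpow_le_rpow_of_nonpos hm hle (neg_nonpos.mpr hs)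

lemma div_rpow_neg {x c s : ℝ} (hx : 0 ≤ x) (hc : 0 < c) :
    (x / c) ^ (-s) = x ^ (-s) * c ^ s := by
  rw [Real.div_rpow hx hc.le, Real.rpow_neg hc.le, div_eq_mul_inv, inv_inv]

lemma key_bound {a b r θ : ℝ} (ha0 : 0 < a) (ha1 : a < 1) (hb0 : 0 < b) (hb1 : b < 1)
    (hr0 : 0 ≤ r) (hr1 : r < 1) (hθ0 : 0 < θ) (hθ2 : θ < 2*π) (hθπ : θ ≠ π) :
    ‖1 - (r:ℂ) * Complex.exp ((θ:ℂ) * Complex.I)‖ ^ (-a)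
      * ‖1 + (r:ℂ) * Complex.exp ((θ:ℂ) * Complex.I)‖ ^ (-b)
      ≤ 2*π*(θ^(-a) + (2*π-θ)^(-a)) + π * |π-θ|^(-b) + 4 := by
  have hπ := Real.pi_gt_three
  set A := ‖1 - (r:ℂ) * Complex.exp ((θ:ℂ) * Complex.I)‖ with hA
  set B := ‖1 + (r:ℂ) * Complex.exp ((θ:ℂ) * Complex.I)‖ with hB
  have hA2 := sq_abs_one_sub r θ
  have hB2 := sq_abs_one_add r θ
  rw [← hA] at hA2; rw [← hB] at hB2
  have hA0 : 0 < A := one_sub_pos r θ hr0 hr1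
  have hB0 : 0 < B := one_add_pos r θ hr0 hr1
  have hcos1 : Real.cos θ ≤ 1 := Real.cos_le_one θ
  have hcos1' : -1 ≤ Real.cos θ := Real.neg_one_le_cos θ
  have hθa : 0 ≤ θ^(-a) := Real.rpow_nonneg hθ0.le _
  have hθa' : 0 ≤ (2*π-θ)^(-a) := Real.rpow_nonneg (by linarith) _
  have hg1 : 0 ≤ 2*π*(θ^(-a) + (2*π-θ)^(-a)) :=
    mul_nonneg (by positivity) (add_nonneg hθa hθa')
  have hg2 : 0 ≤ π * |π-θ|^(-b) :=
    mul_nonneg Real.pi_pos.le (Real.rpow_nonneg (abs_nonneg _) _)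
  rcases le_or_gt r (1/2) with hr | hr
  · -- far from boundary
    have hA12 : (1:ℝ)/2 ≤ A := by nlinarith
    have hB12 : (1:ℝ)/2 ≤ B := by nlinarith
    have key : ∀ s : ℝ, 0 ≤ s → s ≤ 1 → ((1:ℝ)/2) ^ (-s) ≤ 2 := by
      intro s hs0 hs1
      have he : ((1:ℝ)/2) ^ (-s) = 2 ^ s := by
        rw [one_div, Real.inv_rpow (by norm_num : (0:ℝ) ≤ 2),
          Real.rpow_neg (by norm_num : (0:ℝ) ≤ 2), inv_inv]
      rw [he]
      calc (2:ℝ)^s ≤ 2^(1:ℝ) := Real.rpow_le_rpow_of_exponent_le one_le_two hs1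
        _ = 2 := Real.rpow_one 2
    have hA4 : A ^ (-a) ≤ 2 :=
      le_trans (rpow_neg_le_of_le (by norm_num) hA12 ha0.le) (key a ha0.le ha1.le)
    have hB4 : B ^ (-b) ≤ 2 :=
      le_trans (rpow_neg_le_of_le (by norm_num) hB12 hb0.le) (key b hb0.le hb1.le)
    calc A ^ (-a) * B ^ (-b) ≤ 2 * 2 :=
          mul_le_mul hA4 hB4 (Real.rpow_nonneg hB0.le _) (by norm_num)
      _ = 4 := by norm_num
      _ ≤ _ := by linarith
  · have hs2 : Real.sin (θ/2)^2 = 1/2 - Real.cos θ / 2 := by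
      have := Real.sin_sq_eq_half_sub (θ/2)
      rwa [show 2*(θ/2) = θ by ring] at this
    have hc2 : Real.cos (θ/2)^2 = 1/2 + Real.cos θ / 2 := by
      have := Real.cos_sq (θ/2)
      rwa [show 2*(θ/2) = θ by ring] at this
    rcases le_total 0 (Real.cos θ) with hc | hc
    · -- near θ = 0 or 2π
      have hBb : B ^ (-b) ≤ 1 :=
        Real.rpow_le_one_of_one_le_of_nonpos (by nlinarith) (by linarith)
      have hsin_nonneg : 0 ≤ Real.sin (θ/2) :=
        Real.sin_nonneg_of_nonneg_of_le_pi (by linarith) (by linarith)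
      have hAsin : Real.sin (θ/2) ≤ A := by nlinarith
      have hmain : A ^ (-a) ≤ 2*π*(θ^(-a) + (2*π-θ)^(-a)) := by
        rcases le_total θ π with hθp | hθp
        · have hsl : θ/(2*π) ≤ Real.sin (θ/2) := by
            have := Real.mul_le_sin (x := θ/2) (by linarith) (by linarith)
            calc θ/(2*π) ≤ θ/π := by
                  apply div_le_div_of_nonneg_left hθ0.le Real.pi_pos (by linarith)
              _ = 2/π * (θ/2) := by ring
              _ ≤ Real.sin (θ/2) := this
          have h1 : A ^ (-a) ≤ (θ/(2*π)) ^ (-a) :=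
            rpow_neg_le_of_le (by positivity) (by linarith) ha0.le
          have h2 : (θ/(2*π)) ^ (-a) = θ^(-a) * (2*π)^a := div_rpow_neg hθ0.le (by positivity)
          have h3 : (2*π)^a ≤ 2*π := by
            calc (2*π)^a ≤ (2*π)^(1:ℝ) :=
                  Real.rpow_le_rpow_of_exponent_le (by linarith) ha1.le
              _ = 2*π := Real.rpow_one _
          calc A ^ (-a) ≤ θ^(-a) * (2*π)^a := by rw [← h2]; exact h1
            _ ≤ θ^(-a) * (2*π) := by nlinarith [Real.rpow_nonneg hθ0.le (-a)]
            _ ≤ 2*π*(θ^(-a) + (2*π-θ)^(-a)) := by nlinarith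
        · have hs' : Real.sin (θ/2) = Real.sin ((2*π-θ)/2) := by
            rw [show (2*π-θ)/2 = π - θ/2 by ring, Real.sin_pi_sub]
          have hsl : (2*π-θ)/(2*π) ≤ Real.sin (θ/2) := by
            rw [hs']
            have := Real.mul_le_sin (x := (2*π-θ)/2) (by linarith) (by linarith)
            calc (2*π-θ)/(2*π) ≤ (2*π-θ)/π := by
                  apply div_le_div_of_nonneg_left (by linarith) Real.pi_pos (by linarith)
              _ = 2/π * ((2*π-θ)/2) := by ring
              _ ≤ _ := this
          rcases eq_or_lt_of_le hθ2.le with h | hlt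
          · exfalso; linarith
          have hpos : 0 < (2*π-θ)/(2*π) := div_pos (by linarith) (by positivity)
          have h1 : A ^ (-a) ≤ ((2*π-θ)/(2*π)) ^ (-a) :=
            rpow_neg_le_of_le hpos (by linarith) ha0.le
          have h2 : ((2*π-θ)/(2*π)) ^ (-a) = (2*π-θ)^(-a) * (2*π)^a :=
            div_rpow_neg (by linarith) (by positivity)
          have h3 : (2*π)^a ≤ 2*π := by
            calc (2*π)^a ≤ (2*π)^(1:ℝ) :=
                  Real.rpow_le_rpow_of_exponent_le (by linarith) ha1.le
              _ = 2*π := Real.rpow_one _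
          calc A ^ (-a) ≤ (2*π-θ)^(-a) * (2*π)^a := by rw [← h2]; exact h1
            _ ≤ (2*π-θ)^(-a) * (2*π) := by nlinarith
            _ ≤ 2*π*(θ^(-a) + (2*π-θ)^(-a)) := by nlinarith
      calc A ^ (-a) * B ^ (-b) ≤ A ^ (-a) * 1 :=
            mul_le_mul_of_nonneg_left hBb (Real.rpow_nonneg hA0.le _)
        _ = A ^ (-a) := mul_one _
        _ ≤ 2*π*(θ^(-a) + (2*π-θ)^(-a)) := hmain
        _ ≤ _ := by linarith
    · -- near θ = π
      have hAa : A ^ (-a) ≤ 1 :=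
        Real.rpow_le_one_of_one_le_of_nonpos (by nlinarith) (by linarith)
      have hBcos : |Real.cos (θ/2)| ≤ B := by
        nlinarith [_root_.sq_abs (Real.cos (θ/2)), abs_nonneg (Real.cos (θ/2))]
      have hcl : |π-θ|/π ≤ |Real.cos (θ/2)| := by
        rcases hθπ.lt_or_gt with hlt | hlt
        · rw [_root_.abs_of_pos (by linarith : (0:ℝ) < π - θ)]
          have hcv : Real.cos (θ/2) = Real.sin ((π-θ)/2) := by
            rw [show (π-θ)/2 = π/2 - θ/2 by ring, Real.sin_pi_div_two_sub]
          have := Real.mul_le_sin (x := (π-θ)/2) (by linarith) (by linarith)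
          calc (π-θ)/π = 2/π * ((π-θ)/2) := by ring
            _ ≤ Real.sin ((π-θ)/2) := this
            _ = Real.cos (θ/2) := hcv.symm
            _ ≤ |Real.cos (θ/2)| := le_abs_self _
        · rw [_root_.abs_of_neg (by linarith : π - θ < 0)]
          have hcv : -Real.cos (θ/2) = Real.sin ((θ-π)/2) := by
            rw [show (θ-π)/2 = -(π/2 - θ/2) by ring, Real.sin_neg,
              Real.sin_pi_div_two_sub]
          have := Real.mul_le_sin (x := (θ-π)/2) (by linarith) (by linarith)
          calc -(π-θ)/π = 2/π * ((θ-π)/2) := by ring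
            _ ≤ Real.sin ((θ-π)/2) := this
            _ = -Real.cos (θ/2) := hcv.symm
            _ ≤ |Real.cos (θ/2)| := neg_le_abs _
      have hπθ : 0 < |π-θ| := abs_pos.mpr (sub_ne_zero.mpr (Ne.symm hθπ))
      have h1 : B ^ (-b) ≤ (|π-θ|/π) ^ (-b) :=
        rpow_neg_le_of_le (div_pos hπθ Real.pi_pos) (hcl.trans hBcos) hb0.le
      have h2 : (|π-θ|/π) ^ (-b) = |π-θ|^(-b) * π^b :=
        div_rpow_neg (abs_nonneg _) Real.pi_pos
      have h3 : π^b ≤ π := by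
        calc π^b ≤ π^(1:ℝ) := Real.rpow_le_rpow_of_exponent_le (by linarith) hb1.le
          _ = π := Real.rpow_one _
      have habs : 0 ≤ |π-θ|^(-b) := Real.rpow_nonneg (abs_nonneg _) _
      calc A ^ (-a) * B ^ (-b) ≤ 1 * B ^ (-b) :=
            mul_le_mul_of_nonneg_right hAa (Real.rpow_nonneg hB0.le _)
        _ = B ^ (-b) := one_mul _
        _ ≤ |π-θ|^(-b) * π^b := by rw [← h2]; exact h1
        _ ≤ π * |π-θ|^(-b) := by nlinarith
        _ ≤ _ := by linarith


lemma g_integrable {a b : ℝ} (ha1 : a < 1) (hb1 : b < 1) :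
    IntervalIntegrable (fun θ : ℝ => 2*π*(θ^(-a) + (2*π-θ)^(-a)) + π * |π-θ|^(-b) + 4)
      volume 0 (2*π) := by
  apply IntervalIntegrable.add
  apply IntervalIntegrable.add
  · apply IntervalIntegrable.const_mul
    apply IntervalIntegrable.add
    · exact intervalIntegral.intervalIntegrable_rpow' (by linarith)
    · have := (intervalIntegral.intervalIntegrable_rpow' (a := 0) (b := 2*π) (r := -a)
        (by linarith)).comp_sub_left (2*π)
      simpa using this.symm
  · apply IntervalIntegrable.const_mul
    have := (II_abs_rpow (s := -b) (by linarith) π (-π)).comp_sub_left π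
    rw [show (2*π:ℝ) = π - -π by ring]
    simpa using this
  · exact intervalIntegrable_const

lemma diff_f (α : ℝ) :
    DifferentiableOn ℂ (fun z => (1 - z) ^ (-(1 + (α:ℂ))) * (1 + z) ^ (-(1 - (α:ℂ))))
      (Metric.ball (0:ℂ) 1) := by
  intro z hz
  rw [Metric.mem_ball, dist_zero_right] at hz
  have hre := Complex.abs_re_le_norm z
  have h1 : (1 - z) ∈ Complex.slitPlane := by
    apply Or.inl
    simp only [Complex.sub_re, Complex.one_re]
    cases abs_le.mp hre; linarith
  have h2 : (1 + z) ∈ Complex.slitPlane := by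
    apply Or.inl
    simp only [Complex.add_re, Complex.one_re]
    cases abs_le.mp hre; linarith
  apply DifferentiableAt.differentiableWithinAt
  exact (((differentiableAt_const _).sub differentiableAt_id).cpow
      (differentiableAt_const _) h1).mul
    (((differentiableAt_const _).add differentiableAt_id).cpow
      (differentiableAt_const _) h2)


lemma forward_bound {α p : ℝ} (hα0 : 0 < α) (hα1 : α < 1) (hp : 0 < p)
    (hlt : p < 1 / (1 + α)) (r : ℝ) (hr0 : 0 ≤ r) (hr1 : r < 1) :
    (∫ θ in (0:ℝ)..(2 * π),
        (‖(1 - (r:ℂ) * Complex.exp ((θ:ℂ) * Complex.I)) ^ (-(1 + (α:ℂ))) *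
          (1 + (r:ℂ) * Complex.exp ((θ:ℂ) * Complex.I)) ^ (-(1 - (α:ℂ)))‖) ^ p)
      ≤ ∫ θ in (0:ℝ)..(2 * π),
          (2*π*(θ^(-((1+α)*p)) + (2*π-θ)^(-((1+α)*p))) + π * |π-θ|^(-((1-α)*p)) + 4) := by
  have hπ := Real.pi_gt_three
  set a := (1+α)*p with ha_def
  set b := (1-α)*p with hb_def
  have ha0 : 0 < a := by positivity
  have ha1 : a < 1 := by
    rw [lt_div_iff₀ (by linarith)] at hlt; nlinarith
  have hb0 : 0 < b := by
    apply mul_pos (by linarith) hp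
  have hb1 : b < 1 := by nlinarith
  have hcongr : ∀ θ : ℝ,
      (‖(1 - (r:ℂ) * Complex.exp ((θ:ℂ) * Complex.I)) ^ (-(1 + (α:ℂ))) *
          (1 + (r:ℂ) * Complex.exp ((θ:ℂ) * Complex.I)) ^ (-(1 - (α:ℂ)))‖) ^ p
        = ‖1 - (r:ℂ) * Complex.exp ((θ:ℂ) * Complex.I)‖ ^ (-a) *
            ‖1 + (r:ℂ) * Complex.exp ((θ:ℂ) * Complex.I)‖ ^ (-b) :=
    fun θ => abs_f_eq α p _
  simp only [hcongr]
  apply intervalIntegral.integral_mono_ae_restrict (by positivity)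
    ((cont_F a b r hr0 hr1).intervalIntegrable _ _) (g_integrable ha1 hb1)
  have hnull : volume ({0, π, 2*π} : Set ℝ) = 0 := (Set.toFinite _).measure_zero _
  have h0' : ∀ᵐ θ ∂(volume : Measure ℝ), θ ∉ ({0, π, 2*π} : Set ℝ) :=
    MeasureTheory.compl_mem_ae_iff.mpr hnull
  have h1 := MeasureTheory.ae_restrict_of_ae (s := Set.Icc (0:ℝ) (2*π)) h0'
  filter_upwards [h1, MeasureTheory.ae_restrict_mem measurableSet_Icc] with θ hθ hmem
  simp only [Set.mem_insert_iff, Set.mem_singleton_iff, not_or] at hθ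
  obtain ⟨h0, hpi, h2pi⟩ := hθ
  exact key_bound ha0 ha1 hb0 hb1 hr0 hr1 (lt_of_le_of_ne hmem.1 (Ne.symm h0))
    (lt_of_le_of_ne hmem.2 h2pi) hpi


lemma reverse_false {α p : ℝ} (hα0 : 0 < α) (hα1 : α < 1) (hp : 0 < p)
    (hge : 1/(1+α) ≤ p) (C : ℝ)
    (hC : ∀ r : ℝ, 0 ≤ r → r < 1 →
      (∫ θ in (0:ℝ)..(2*π),
        (‖(1 - (r:ℂ) * Complex.exp ((θ:ℂ) * Complex.I)) ^ (-(1 + (α:ℂ))) *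
          (1 + (r:ℂ) * Complex.exp ((θ:ℂ) * Complex.I)) ^ (-(1 - (α:ℂ)))‖) ^ p) ≤ C) :
    False := by
  have hπ := Real.pi_gt_three
  set a := (1+α)*p with ha_def
  set b := (1-α)*p with hb_def
  have ha1 : 1 ≤ a := by
    rw [div_le_iff₀ (by linarith)] at hge; linarith [hge]
  have hb0 : 0 < b := mul_pos (by linarith) hp
  set c : ℝ := 2^(-b) * 2^(1-a) with hc_def
  have hc0 : 0 < c := mul_pos (Real.rpow_pos_of_pos two_pos _) (Real.rpow_pos_of_pos two_pos _)
  set K : ℝ := (max C 0 + 1) * (2^b * 2^(a-1)) with hK_def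
  have hK0 : 0 < K := by positivity
  set K' : ℝ := max K (Real.log 2) with hK'_def
  set ε : ℝ := Real.exp (-K') with hε_def
  have hε0 : 0 < ε := Real.exp_pos _
  have hεhalf : ε ≤ 1/2 := by
    rw [hε_def]
    calc Real.exp (-K') ≤ Real.exp (-(Real.log 2)) :=
          Real.exp_le_exp.mpr (neg_le_neg (le_max_right _ _))
      _ = 1/2 := by rw [Real.exp_neg, Real.exp_log two_pos]; norm_num
  set r : ℝ := 1 - ε with hr_def
  have hr0 : 0 ≤ r := by rw [hr_def]; linarith
  have hr1 : r < 1 := by rw [hr_def]; linarith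
  have hcongr : ∀ θ : ℝ,
      (‖(1 - (r:ℂ) * Complex.exp ((θ:ℂ) * Complex.I)) ^ (-(1 + (α:ℂ))) *
          (1 + (r:ℂ) * Complex.exp ((θ:ℂ) * Complex.I)) ^ (-(1 - (α:ℂ)))‖) ^ p
        = ‖1 - (r:ℂ) * Complex.exp ((θ:ℂ) * Complex.I)‖ ^ (-a) *
            ‖1 + (r:ℂ) * Complex.exp ((θ:ℂ) * Complex.I)‖ ^ (-b) :=
    fun θ => abs_f_eq α p _
  have hCr := hC r hr0 hr1
  simp only [hcongr] at hCr
  set G : ℝ → ℝ := fun θ =>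
    ‖1 - (r:ℂ) * Complex.exp ((θ:ℂ) * Complex.I)‖ ^ (-a) *
      ‖1 + (r:ℂ) * Complex.exp ((θ:ℂ) * Complex.I)‖ ^ (-b) with hG_def
  have hGcont : Continuous G := cont_F a b r hr0 hr1
  have hGnonneg : ∀ θ, 0 ≤ G θ := fun θ =>
    mul_nonneg (Real.rpow_nonneg (norm_nonneg _) _) (Real.rpow_nonneg (norm_nonneg _) _)
  -- pointwise lower bound on [0,1]
  have hlow : ∀ θ ∈ Set.Icc (0:ℝ) 1, c * (ε+θ)⁻¹ ≤ G θ := by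
    rintro θ ⟨hθ0, hθ1⟩
    have hA2 := sq_abs_one_sub r θ
    have hB2 := sq_abs_one_add r θ
    have hA0 := one_sub_pos r θ hr0 hr1
    have hB0 := one_add_pos r θ hr0 hr1
    set A := ‖1 - (r:ℂ) * Complex.exp ((θ:ℂ) * Complex.I)‖
    set B := ‖1 + (r:ℂ) * Complex.exp ((θ:ℂ) * Complex.I)‖
    have hs2 : Real.sin (θ/2)^2 = 1/2 - Real.cos θ / 2 := by
      have := Real.sin_sq_eq_half_sub (θ/2)
      rwa [show 2*(θ/2) = θ by ring] at this
    have hsle : Real.sin (θ/2) ≤ θ/2 := Real.sin_le (by linarith)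
    have hsnn : 0 ≤ Real.sin (θ/2) :=
      Real.sin_nonneg_of_nonneg_of_le_pi (by linarith) (by linarith)
    have hAub : A ≤ ε + θ := by nlinarith
    have hBub : B ≤ 2 := by nlinarith
    have hu0 : 0 < ε + θ := by linarith
    have h1 : (ε+θ)^(-a) ≤ A^(-a) :=
      Real.rpow_le_rpow_of_nonpos hA0 hAub (by linarith)
    have h2 : (2:ℝ)^(-b) ≤ B^(-b) :=
      Real.rpow_le_rpow_of_nonpos hB0 hBub (by linarith)
    have h3 : 2^(1-a) * (ε+θ)⁻¹ ≤ (ε+θ)^(-a) := by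
      have he : (ε+θ)^(-a) = (ε+θ)^(1-a) * (ε+θ)⁻¹ := by
        rw [← Real.rpow_neg_one (ε+θ), ← Real.rpow_add hu0]
        congr 1
        ring
      rw [he]
      have h4 : (2:ℝ)^(1-a) ≤ (ε+θ)^(1-a) :=
        Real.rpow_le_rpow_of_nonpos hu0 (by linarith) (by linarith)
      exact mul_le_mul_of_nonneg_right h4 (inv_nonneg.mpr hu0.le)
    calc c * (ε+θ)⁻¹ = 2^(-b) * (2^(1-a) * (ε+θ)⁻¹) := by rw [hc_def]; ring
      _ ≤ 2^(-b) * (ε+θ)^(-a) :=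
          mul_le_mul_of_nonneg_left h3 (Real.rpow_nonneg (by norm_num) _)
      _ ≤ B^(-b) * A^(-a) :=
          mul_le_mul h2 h1 (Real.rpow_nonneg hu0.le _) (Real.rpow_nonneg hB0.le _)
      _ = G θ := by rw [hG_def]; ring
  -- integral computations
  have hIRcont : ContinuousOn (fun θ : ℝ => c * (ε+θ)⁻¹) (Set.uIcc (0:ℝ) 1) := by
    apply ContinuousOn.mul continuousOn_const
    apply ContinuousOn.inv₀ (continuous_const.add continuous_id).continuousOn
    intro x hx
    rw [Set.uIcc_of_le (by norm_num : (0:ℝ) ≤ 1)] at hx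
    have := hx.1
    exact (show (0:ℝ) < ε + x by linarith).ne'
  have hIR : IntervalIntegrable (fun θ : ℝ => c * (ε+θ)⁻¹) volume 0 1 :=
    hIRcont.intervalIntegrable
  have hmono : (∫ θ in (0:ℝ)..1, c * (ε+θ)⁻¹) ≤ ∫ θ in (0:ℝ)..1, G θ :=
    intervalIntegral.integral_mono_on (by norm_num) hIR
      (hGcont.intervalIntegrable _ _) hlow
  have hval : (∫ θ in (0:ℝ)..1, c * (ε+θ)⁻¹) = c * (Real.log (1+ε) - Real.log ε) := by
    rw [intervalIntegral.integral_const_mul]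
    congr 1
    have : (∫ θ in (0:ℝ)..1, (ε+θ)⁻¹) = ∫ θ in (0:ℝ)..1, (θ+ε)⁻¹ := by
      simp only [add_comm]
    rw [this, intervalIntegral.integral_comp_add_right (fun u => u⁻¹) ε]
    rw [integral_inv (by rw [Set.mem_uIcc]; push_neg; constructor <;> intro <;> linarith)]
    rw [zero_add, Real.log_div (by linarith) hε0.ne']
  have hsplit : (∫ θ in (0:ℝ)..(2*π), G θ)
      = (∫ θ in (0:ℝ)..1, G θ) + ∫ θ in (1:ℝ)..(2*π), G θ :=
    (intervalIntegral.integral_add_adjacent_intervals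
      (hGcont.intervalIntegrable _ _) (hGcont.intervalIntegrable _ _)).symm
  have htail : 0 ≤ ∫ θ in (1:ℝ)..(2*π), G θ :=
    intervalIntegral.integral_nonneg (by linarith) (fun u _ => hGnonneg u)
  have hlogε : Real.log ε = -K' := by rw [hε_def, Real.log_exp]
  have hlog1ε : 0 ≤ Real.log (1+ε) := Real.log_nonneg (by linarith)
  have hcK : c * K = max C 0 + 1 := by
    rw [hc_def, hK_def]
    have e1 : (2:ℝ)^(-b) * 2^b = 1 := by
      rw [← Real.rpow_add two_pos]; norm_num
    have e2 : (2:ℝ)^(1-a) * 2^(a-1) = 1 := by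
      rw [← Real.rpow_add two_pos]; norm_num
    calc 2^(-b) * 2^(1-a) * ((max C 0 + 1) * (2^b * 2^(a-1)))
        = (max C 0 + 1) * ((2^(-b) * 2^b) * (2^(1-a) * 2^(a-1))) := by ring
      _ = max C 0 + 1 := by rw [e1, e2]; ring
  have hchain : max C 0 + 1 ≤ C := by
    calc max C 0 + 1 = c * K := hcK.symm
      _ ≤ c * K' := by
          apply mul_le_mul_of_nonneg_left (le_max_left _ _) hc0.le
      _ ≤ c * (Real.log (1+ε) - Real.log ε) := by
          apply mul_le_mul_of_nonneg_left _ hc0.le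
          rw [hlogε]; linarith
      _ = ∫ θ in (0:ℝ)..1, c * (ε+θ)⁻¹ := hval.symm
      _ ≤ ∫ θ in (0:ℝ)..1, G θ := hmono
      _ ≤ ∫ θ in (0:ℝ)..(2*π), G θ := by rw [hsplit]; linarith
      _ ≤ C := hCr
  have := le_max_left C 0
  linarith

theorem stmt_4 (α : ℝ) (hα : α ∈ Set.Ioo (0:ℝ) 1) (p : ℝ) (hp : 0 < p) :
    InHardy p (fun z => (1 - z) ^ (-(1 + (α:ℂ))) * (1 + z) ^ (-(1 - (α:ℂ)))) ↔
      p < 1 / (1 + α) := by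
  obtain ⟨hα0, hα1⟩ := hα
  constructor
  · intro h
    by_contra hnot
    push_neg at hnot
    obtain ⟨hdiff, C, hC⟩ := h
    exact reverse_false hα0 hα1 hp hnot C hC
  · intro hlt
    refine ⟨diff_f α, ∫ θ in (0:ℝ)..(2*π),
      (2*π*(θ^(-((1+α)*p)) + (2*π-θ)^(-((1+α)*p))) + π * |π-θ|^(-((1-α)*p)) + 4), ?_⟩
    intro r hr0 hr1
    exact forward_bound hα0 hα1 hp hlt r hr0 hr1
end

section
/- Let f be holomorphic and injective on the unit disk with f(0)=0, f'(0)=1, f''(0)=0, and suppose f is convex (h(z) = 1 + z f''(z)/f'(z) has positive real part). Let a₃ = f'''(0)/6 and γ = 3|a₃|. Then |f'(z)| ≤ (1−|z|)^{−2(1+γ)/(3+γ)} for all z in the unit disk. -/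
open Complex Metric

-- Schwarz-Pick style bound at 0 for functions bounded by 1.
lemma sp_main {ψ : ℂ → ℂ} (hψ : DifferentiableOn ℂ ψ (ball 0 1))
    (hb : ∀ ζ ∈ ball (0:ℂ) 1, ‖ψ ζ‖ ≤ 1) :
    ∀ ζ ∈ ball (0:ℂ) 1, ‖ψ ζ‖ * (1 + ‖ψ 0‖ * ‖ζ‖)
      ≤ ‖ψ 0‖ + ‖ζ‖ := by
  have h0 : (0:ℂ) ∈ ball (0:ℂ) 1 := mem_ball_self one_pos
  set a := ψ 0 with ha
  set g := ‖a‖ with hgdef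
  have hg0 : 0 ≤ g := norm_nonneg a
  have hg1 : g ≤ 1 := hb 0 h0
  rcases eq_or_lt_of_le hg1 with hg | hg
  · -- |ψ 0| = 1 : maximum modulus, ψ has constant modulus 1
    intro ζ hζ
    have hmax : IsMaxOn (norm ∘ ψ) (ball (0:ℂ) 1) 0 := by
      intro x hx
      simp only [Function.comp_apply, Set.mem_setOf_eq]
      show ‖ψ x‖ ≤ ‖ψ 0‖
      rw [← ha, ← hgdef, hg]
      exact hb x hx
    have := Complex.norm_eqOn_of_isPreconnected_of_isMaxOn
      (convex_ball (0:ℂ) 1).isPreconnected isOpen_ball hψ h0 hmax hζ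
    have hx : ‖ψ ζ‖ = 1 := by
      simpa [← ha, ← hgdef, hg] using this
    rw [hx]
    have : 0 ≤ ‖ζ‖ := norm_nonneg ζ
    nlinarith [hg]
  · -- |ψ 0| < 1 : Möbius + Schwarz
    set χ : ℂ → ℂ := fun ζ => (ψ ζ - a) / (1 - (starRingEnd ℂ) a * ψ ζ) with hχ
    have hden : ∀ ζ ∈ ball (0:ℂ) 1, (1 - (starRingEnd ℂ) a * ψ ζ) ≠ 0 := by
      intro ζ hζ hc
      have h1 : ‖(starRingEnd ℂ) a * ψ ζ‖ ≤ g * 1 := by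
        rw [norm_mul, Complex.norm_conj]
        exact mul_le_mul_of_nonneg_left (hb ζ hζ) hg0
      have h2 : (1 : ℂ) = (starRingEnd ℂ) a * ψ ζ := by linear_combination hc
      rw [← h2] at h1
      simp at h1
      nlinarith
    have hχd : DifferentiableOn ℂ χ (ball 0 1) :=
      (hψ.sub_const a).div ((differentiableOn_const 1).sub
        ((differentiableOn_const _).mul hψ)) hden
    have hχ0 : χ 0 = 0 := by simp [hχ, ha]
    have hχb : ∀ ζ ∈ ball (0:ℂ) 1, ‖χ ζ‖ ≤ 1 := by
      intro ζ hζ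
      have key : Complex.normSq (1 - (starRingEnd ℂ) a * ψ ζ) - Complex.normSq (ψ ζ - a)
          = (1 - Complex.normSq a) * (1 - Complex.normSq (ψ ζ)) := by
        simp only [Complex.normSq_apply, Complex.mul_re, Complex.mul_im, Complex.conj_re,
          Complex.conj_im, Complex.sub_re, Complex.sub_im, Complex.one_re, Complex.one_im]
        ring
      have hsq1 : Complex.normSq a ≤ 1 := by
        rw [← Complex.sq_norm]; nlinarith
      have hsq2 : Complex.normSq (ψ ζ) ≤ 1 := by
        rw [← Complex.sq_norm]; have := hb ζ hζ; have := norm_nonneg (ψ ζ); nlinarith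
      have hle : Complex.normSq (ψ ζ - a) ≤ Complex.normSq (1 - (starRingEnd ℂ) a * ψ ζ) := by
        nlinarith [Complex.normSq_nonneg a, Complex.normSq_nonneg (ψ ζ)]
      have habs : ‖ψ ζ - a‖ ≤ ‖1 - (starRingEnd ℂ) a * ψ ζ‖ := by
        rw [Complex.norm_def, Complex.norm_def]
        exact Real.sqrt_le_sqrt hle
      rw [hχ]
      simp only [norm_div]
      rw [div_le_one (norm_pos_iff.mpr (hden ζ hζ))]
      exact habs
    -- Schwarz lemma: |χ ζ| ≤ |ζ|
    have hschwarz : ∀ ζ ∈ ball (0:ℂ) 1, ‖χ ζ‖ ≤ ‖ζ‖ := by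
      intro ζ hζ
      have hR : ∀ R : ℝ, 1 < R → ‖χ ζ‖ ≤ R * ‖ζ‖ := by
        intro R hR
        have hmaps : Set.MapsTo χ (ball 0 1) (ball (χ 0) R) := by
          intro x hx
          rw [hχ0, mem_ball, dist_zero_right]
          exact lt_of_le_of_lt (hχb x hx) hR
        have := Complex.norm_dslope_le_div_of_mapsTo_ball hχd (hmaps.mono_right ball_subset_closedBall) hζ
        rcases eq_or_ne ζ 0 with h | h
        · simp [h, hχ0]
        · rw [dslope_of_ne _ h, slope_def_field, hχ0, sub_zero, sub_zero] at this
          rw [norm_div, div_one,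
            div_le_iff₀ (norm_pos_iff.mpr h)] at this
          linarith [this]
      by_contra hcon
      push_neg at hcon
      rcases eq_or_lt_of_le (norm_nonneg ζ) with hz0 | hz0
      · have := hR 2 one_lt_two
        rw [← hz0] at this hcon
        simp at this
        simp [this] at hcon
      · have hgt : 1 < (‖ζ‖ + ‖χ ζ‖) / (2 * ‖ζ‖) := by
          rw [lt_div_iff₀ (by linarith)]; linarith
        have := hR _ hgt
        have h2 : ‖ζ‖ * ((‖ζ‖ + ‖χ ζ‖) / (2 * ‖ζ‖))
            = (‖ζ‖ + ‖χ ζ‖) / 2 := by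
          field_simp
        rw [mul_comm] at this
        rw [h2] at this
        linarith
    -- final algebra
    intro ζ hζ
    set r := ‖ζ‖ with hrdef
    set x := ‖ψ ζ‖ with hxdef
    have hr0 : 0 ≤ r := norm_nonneg ζ
    have hr1 : r < 1 := by simpa [hrdef, mem_ball, dist_zero_right] using hζ
    have hx0 : 0 ≤ x := norm_nonneg (ψ ζ)
    have hx1 : x ≤ 1 := hb ζ hζ
    have hkey : ‖ψ ζ - a‖ ≤ r * ‖1 - (starRingEnd ℂ) a * ψ ζ‖ := by
      have h1 := hschwarz ζ hζ
      rw [hχ] at h1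
      simp only [norm_div] at h1
      rw [div_le_iff₀ (norm_pos_iff.mpr (hden ζ hζ))] at h1
      linarith [h1]
    set t := ((starRingEnd ℂ) a * ψ ζ).re with htdef
    have e1 : Complex.normSq (ψ ζ - a) = x ^ 2 + g ^ 2 - 2 * t := by
      rw [hxdef, hgdef, Complex.sq_norm, Complex.sq_norm, htdef]
      simp only [Complex.normSq_apply, Complex.mul_re, Complex.conj_re,
        Complex.conj_im, Complex.sub_re, Complex.sub_im]
      ring
    have e2 : Complex.normSq (1 - (starRingEnd ℂ) a * ψ ζ) = 1 + g ^ 2 * x ^ 2 - 2 * t := by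
      rw [hxdef, hgdef, htdef, Complex.sq_norm, Complex.sq_norm]
      simp only [Complex.normSq_apply, Complex.mul_re, Complex.mul_im,
        Complex.conj_re, Complex.conj_im, Complex.sub_re, Complex.sub_im,
        Complex.one_re, Complex.one_im]
      ring
    have ht : t ≤ g * x := by
      calc t ≤ ‖(starRingEnd ℂ) a * ψ ζ‖ := Complex.re_le_norm _
      _ = g * x := by rw [norm_mul, Complex.norm_conj]
    have hQ : x ^ 2 + g ^ 2 - 2 * t ≤ r ^ 2 * (1 + g ^ 2 * x ^ 2 - 2 * t) := by
      have := hkey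
      have h2 : Complex.normSq (ψ ζ - a) ≤ r ^ 2 * Complex.normSq (1 - (starRingEnd ℂ) a * ψ ζ) := by
        rw [← Complex.sq_norm, ← Complex.sq_norm]
        nlinarith [norm_nonneg (ψ ζ - a), norm_nonneg (1 - (starRingEnd ℂ) a * ψ ζ)]
      rw [e1, e2] at h2
      exact h2
    by_contra hcon
    push_neg at hcon
    have hA : 0 < x * (1 + g * r) - (g + r) := by linarith
    have hB : 0 < x * (1 - g * r) - (g - r) := by
      have hgx : g * x ≤ 1 := by nlinarith
      have h3 : 0 ≤ r * (1 - g * x) := mul_nonneg hr0 (by linarith)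
      nlinarith
    have hfac : (x * (1 + g * r) - (g + r)) * (x * (1 - g * r) - (g - r))
        = x ^ 2 * (1 - g ^ 2 * r ^ 2) - 2 * g * (1 - r ^ 2) * x + (g ^ 2 - r ^ 2) := by ring
    have h4 : 0 ≤ (1 - r ^ 2) * (g * x - t) :=
      mul_nonneg (by nlinarith) (by linarith)
    nlinarith [mul_pos hA hB, hQ, h4, hfac]

lemma bound_w {γ s W P : ℝ} (hγ0 : 0 ≤ γ) (hs0 : 0 ≤ s) (hs1 : s < 1)
    (hP0 : 0 ≤ P) (hP1 : P ≤ 1) (hW0 : 0 ≤ W)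
    (hPB : P * (1 + γ * s) ≤ γ + s) (hW : W * (1 - s ^ 2 * P) ≤ 2 * s * P) :
    W * (1 - s) * (3 + γ) ≤ 2 * (1 + γ) := by
  have hpos2 : 0 < 1 + γ * s := by nlinarith
  have hQpos : 0 < 1 + (1 + γ) * s + s ^ 2 := by nlinarith
  have hden3 : (1 - s) * (1 + (1 + γ) * s + s ^ 2) ≤ (1 + γ * s) * (1 - s ^ 2 * P) := by
    nlinarith [mul_le_mul_of_nonneg_left hPB (sq_nonneg s)]
  have h6 : W * ((1 - s) * (1 + (1 + γ) * s + s ^ 2)) ≤ 2 * s * (γ + s) := by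
    calc W * ((1 - s) * (1 + (1 + γ) * s + s ^ 2))
        ≤ W * ((1 + γ * s) * (1 - s ^ 2 * P)) := mul_le_mul_of_nonneg_left hden3 hW0
      _ = (1 + γ * s) * (W * (1 - s ^ 2 * P)) := by ring
      _ ≤ (1 + γ * s) * (2 * s * P) := mul_le_mul_of_nonneg_left hW hpos2.le
      _ = 2 * s * (P * (1 + γ * s)) := by ring
      _ ≤ 2 * s * (γ + s) := mul_le_mul_of_nonneg_left hPB (by positivity)
  have hD : 0 ≤ (1 - s) * (2 * s + 1 + γ) := mul_nonneg (by linarith) (by linarith)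
  have hD2 : s * (γ + s) * (3 + γ) ≤ (1 + γ) * (1 + (1 + γ) * s + s ^ 2) := by nlinarith [hD]
  have h7 : (W * (1 - s) * (3 + γ)) * (1 + (1 + γ) * s + s ^ 2)
      ≤ (2 * (1 + γ)) * (1 + (1 + γ) * s + s ^ 2) := by
    calc (W * (1 - s) * (3 + γ)) * (1 + (1 + γ) * s + s ^ 2)
        = (W * ((1 - s) * (1 + (1 + γ) * s + s ^ 2))) * (3 + γ) := by ring
      _ ≤ (2 * s * (γ + s)) * (3 + γ) := mul_le_mul_of_nonneg_right h6 (by linarith)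
      _ = 2 * (s * (γ + s) * (3 + γ)) := by ring
      _ ≤ 2 * ((1 + γ) * (1 + (1 + γ) * s + s ^ 2)) := by linarith [hD2]
      _ = (2 * (1 + γ)) * (1 + (1 + γ) * s + s ^ 2) := by ring
  exact le_of_mul_le_mul_right h7 hQpos

open Complex Metric

theorem stmt_9 (f : ℂ → ℂ)
    (hd : DifferentiableOn ℂ f (Metric.ball 0 1))
    (hinj : Set.InjOn f (Metric.ball 0 1))
    (h0 : f 0 = 0) (h1 : deriv f 0 = 1) (h2 : iteratedDeriv 2 f 0 = 0)
    (hne : ∀ z ∈ Metric.ball (0:ℂ) 1, deriv f z ≠ 0)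
    (hconv : ∀ z ∈ Metric.ball (0:ℂ) 1,
      0 < (1 + z * iteratedDeriv 2 f z / deriv f z).re)
    (a₃ : ℂ) (ha₃ : a₃ = iteratedDeriv 3 f 0 / 6)
    (γ : ℝ) (hγ : γ = 3 * ‖a₃‖) :
    ∀ z ∈ Metric.ball (0:ℂ) 1,
      ‖deriv f z‖ ≤
        (1 - ‖z‖) ^ (-(2 * (1 + γ) / (3 + γ))) := by
  have hop : IsOpen (Metric.ball (0:ℂ) 1) := Metric.isOpen_ball
  have h0m : (0:ℂ) ∈ Metric.ball (0:ℂ) 1 := Metric.mem_ball_self one_pos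
  have hA : AnalyticOnNhd ℂ f (Metric.ball 0 1) := hd.analyticOnNhd hop
  have e2 : iteratedDeriv 2 f = deriv (deriv f) := by
    rw [iteratedDeriv_succ, iteratedDeriv_one]
  have e3 : iteratedDeriv 3 f = deriv (iteratedDeriv 2 f) := iteratedDeriv_succ
  have hA1 : AnalyticOnNhd ℂ (deriv f) (Metric.ball 0 1) := hA.deriv
  have hA2 : AnalyticOnNhd ℂ (iteratedDeriv 2 f) (Metric.ball 0 1) := by
    rw [e2]; exact hA1.deriv
  set w : ℂ → ℂ := fun ζ => iteratedDeriv 2 f ζ / deriv f ζ with hw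
  have hwd : DifferentiableOn ℂ w (Metric.ball 0 1) :=
    hA2.differentiableOn.div hA1.differentiableOn hne
  have hw0 : w 0 = 0 := by simp [hw, h2]
  have hre2 : ∀ ζ ∈ Metric.ball (0:ℂ) 1, 1 < (2 + ζ * w ζ).re := by
    intro ζ hζ
    have h := hconv ζ hζ
    have e : (2 + ζ * w ζ) = 1 + (1 + ζ * iteratedDeriv 2 f ζ / deriv f ζ) := by
      simp only [hw]; rw [mul_div_assoc]; ring
    rw [e, Complex.add_re, Complex.one_re]
    linarith
  have hden : ∀ ζ ∈ Metric.ball (0:ℂ) 1, (2 + ζ * w ζ) ≠ 0 := by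
    intro ζ hζ h
    have := hre2 ζ hζ
    rw [h] at this
    simp only [Complex.zero_re] at this
    linarith
  set φ : ℂ → ℂ := fun ζ => w ζ / (2 + ζ * w ζ) with hφ
  have hφd : DifferentiableOn ℂ φ (Metric.ball 0 1) :=
    hwd.div ((differentiableOn_const 2).add (differentiableOn_id.mul hwd)) hden
  have hφ0 : φ 0 = 0 := by simp [hφ, hw0]
  set Φ : ℂ → ℂ := fun ζ => ζ * w ζ / (2 + ζ * w ζ) with hΦ
  have hΦd : DifferentiableOn ℂ Φ (Metric.ball 0 1) :=
    (differentiableOn_id.mul hwd).div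
      ((differentiableOn_const 2).add (differentiableOn_id.mul hwd)) hden
  have hΦ0 : Φ 0 = 0 := by simp [hΦ]
  have hΦb : ∀ ζ ∈ Metric.ball (0:ℂ) 1, ‖Φ ζ‖ < 1 := by
    intro ζ hζ
    have h1'' : 1 < 2 + (ζ * w ζ).re := by
      have h := hre2 ζ hζ
      simpa [Complex.add_re] using h
    have hq := hden ζ hζ
    have hlt : Complex.normSq (ζ * w ζ) < Complex.normSq (2 + ζ * w ζ) := by
      simp only [Complex.normSq_apply, Complex.add_re, Complex.add_im]
      have h2' : ((2:ℂ)).re = 2 := by norm_num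
      have h2'' : ((2:ℂ)).im = 0 := by norm_num
      rw [h2', h2'']
      nlinarith [h1'']
    have habs : ‖ζ * w ζ‖ < ‖2 + ζ * w ζ‖ := by
      rw [Complex.norm_def, Complex.norm_def]
      exact Real.sqrt_lt_sqrt (Complex.normSq_nonneg _) hlt
    rw [hΦ]
    simp only [norm_div]
    rw [div_lt_one (norm_pos_iff.mpr hq)]
    exact habs
  have hφb : ∀ ζ ∈ Metric.ball (0:ℂ) 1, ‖φ ζ‖ ≤ 1 := by
    intro ζ hζ
    rcases eq_or_ne ζ 0 with rfl | hζ0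
    · rw [hφ0]; simp
    · have hmaps : Set.MapsTo Φ (Metric.ball 0 1) (Metric.ball (Φ 0) 1) := by
        intro x hx
        rw [hΦ0, mem_ball, dist_zero_right]
        exact hΦb x hx
      have hs := Complex.norm_dslope_le_div_of_mapsTo_ball hΦd (hmaps.mono_right ball_subset_closedBall) hζ
      rw [dslope_of_ne _ hζ0, slope_def_field, hΦ0, sub_zero, sub_zero, div_one] at hs
      have heq : Φ ζ / ζ = φ ζ := by
        simp only [hΦ, hφ]
        rw [mul_div_assoc, mul_comm, mul_div_assoc, div_self hζ0, mul_one]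
      rw [heq] at hs
      exact hs
  set ψ : ℂ → ℂ := dslope φ 0 with hψ
  have hψd : DifferentiableOn ℂ ψ (Metric.ball 0 1) :=
    (Complex.differentiableOn_dslope (hop.mem_nhds h0m)).mpr hφd
  have hψb : ∀ ζ ∈ Metric.ball (0:ℂ) 1, ‖ψ ζ‖ ≤ 1 := by
    intro ζ hζ
    by_contra hcon
    push_neg at hcon
    have hR1 : 1 < (1 + ‖ψ ζ‖) / 2 := by linarith
    have hmaps : Set.MapsTo φ (Metric.ball 0 1)
        (Metric.ball (φ 0) ((1 + ‖ψ ζ‖) / 2)) := by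
      intro x hx
      rw [hφ0, mem_ball, dist_zero_right]
      exact lt_of_le_of_lt (hφb x hx) hR1
    have hs := Complex.norm_dslope_le_div_of_mapsTo_ball hφd (hmaps.mono_right ball_subset_closedBall) hζ
    rw [div_one, ← hψ] at hs
    linarith
  -- ψ 0 = 3 a₃
  have hd1 : HasDerivAt (deriv f) (iteratedDeriv 2 f 0) 0 := by
    have h := ((hA1 0 h0m).differentiableAt).hasDerivAt
    rwa [← e2] at h
  have hd2 : HasDerivAt (iteratedDeriv 2 f) (iteratedDeriv 3 f 0) 0 := by
    have h := ((hA2 0 h0m).differentiableAt).hasDerivAt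
    rwa [← e3] at h
  have hwder : HasDerivAt w (iteratedDeriv 3 f 0) 0 := by
    have h := hd2.div hd1 (by rw [h1]; exact one_ne_zero)
    rw [h1, h2] at h
    simpa [hw, Pi.div_def] using h
  have hdender : HasDerivAt (fun ζ : ℂ => 2 + ζ * w ζ) 0 0 := by
    have h := ((hasDerivAt_id (0:ℂ)).mul hwder).const_add 2
    simpa [hw0] using h
  have hφder : HasDerivAt φ (3 * a₃) 0 := by
    have h := hwder.div hdender (hden 0 h0m)
    rw [hw0] at h
    have : (iteratedDeriv 3 f 0 * (2 + 0 * 0) - 0 * 0) / (2 + 0 * 0) ^ 2 = 3 * a₃ := by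
      rw [ha₃]; ring
    rw [this] at h
    exact h
  have hψ0 : ψ 0 = 3 * a₃ := by
    rw [hψ, dslope_same]
    exact hφder.deriv
  have hγψ : ‖ψ 0‖ = γ := by
    rw [hψ0, norm_mul, hγ]
    norm_num
  have hγ0 : 0 ≤ γ := by rw [hγ]; positivity
  have hγ1 : γ ≤ 1 := by rw [← hγψ]; exact hψb 0 h0m
  -- bound on w
  have hwb : ∀ ζ ∈ Metric.ball (0:ℂ) 1,
      ‖w ζ‖ * (1 - ‖ζ‖) * (3 + γ) ≤ 2 * (1 + γ) := by
    intro ζ hζ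
    have hs1 : ‖ζ‖ < 1 := by
      simpa [mem_ball, dist_zero_right] using hζ
    have hPB : ‖ψ ζ‖ * (1 + γ * ‖ζ‖) ≤ γ + ‖ζ‖ := by
      have h := sp_main hψd hψb ζ hζ
      rwa [hγψ] at h
    have hφψ : φ ζ = ζ * ψ ζ := by
      have h := sub_smul_dslope φ 0 ζ
      rw [hφ0, sub_zero, sub_zero, smul_eq_mul] at h
      rw [← hψ] at h
      exact h.symm
    have hq := hden ζ hζ
    have hid : w ζ * (1 - ζ * φ ζ) = 2 * φ ζ := by
      simp only [hφ]
      have hq' : 2 + w ζ * ζ ≠ 0 := by rwa [mul_comm] at hq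
      field_simp
      ring
    have habs1 : ‖w ζ‖ * ‖1 - ζ * φ ζ‖
        = 2 * ‖φ ζ‖ := by
      rw [← norm_mul, hid, norm_mul]
      norm_num
    have hlow : 1 - (‖ζ‖) ^ 2 * ‖ψ ζ‖ ≤ ‖1 - ζ * φ ζ‖ := by
      rw [hφψ]
      have h := norm_sub_norm_le 1 (ζ * (ζ * ψ ζ))
      rw [norm_one, norm_mul, norm_mul] at h
      have e' : (‖ζ‖) ^ 2 * ‖ψ ζ‖
          = ‖ζ‖ * (‖ζ‖ * ‖ψ ζ‖) := by ring
      rw [e']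
      linarith [h]
    have hW : ‖w ζ‖ * (1 - (‖ζ‖) ^ 2 * ‖ψ ζ‖)
        ≤ 2 * ‖ζ‖ * ‖ψ ζ‖ := by
      calc ‖w ζ‖ * (1 - (‖ζ‖) ^ 2 * ‖ψ ζ‖)
          ≤ ‖w ζ‖ * ‖1 - ζ * φ ζ‖ :=
            mul_le_mul_of_nonneg_left hlow (norm_nonneg _)
        _ = 2 * ‖φ ζ‖ := habs1
        _ = 2 * ‖ζ‖ * ‖ψ ζ‖ := by rw [hφψ, norm_mul]; ring
    exact bound_w hγ0 (norm_nonneg ζ) hs1 (norm_nonneg _) (hψb ζ hζ)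
      (norm_nonneg _) hPB hW
  -- final integration step
  intro z hz
  rcases eq_or_ne z 0 with rfl | hz0
  · rw [h1]
    simp [Real.one_rpow]
  · set r := ‖z‖ with hr
    have hr0 : 0 < r := norm_pos_iff.mpr hz0
    have hr1 : r < 1 := by simpa [hr, mem_ball, dist_zero_right] using hz
    set c : ℝ := 2 * (1 + γ) / (3 + γ) with hc
    have hcpos : 0 < 3 + γ := by linarith
    set u : ℝ → ℝ := fun t => -c * Real.log (1 - t * r)
      - (1 / 2) * Real.log (Complex.normSq (deriv f ((t:ℝ) * z))) with hu
    have hts : ∀ t ∈ Set.Icc (0:ℝ) 1, ‖(t:ℝ) * z‖ = t * r := by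
      intro t ht
      rw [norm_mul, Complex.norm_real, Real.norm_eq_abs, _root_.abs_of_nonneg ht.1, hr]
    have hmem : ∀ t ∈ Set.Icc (0:ℝ) 1, ((t:ℝ) * z : ℂ) ∈ Metric.ball (0:ℂ) 1 := by
      intro t ht
      rw [mem_ball, dist_zero_right, hts t ht]
      nlinarith [ht.1, ht.2]
    have htr : ∀ t ∈ Set.Icc (0:ℝ) 1, t * r < 1 := by
      intro t ht
      nlinarith [ht.1, ht.2]
    have hder : ∀ t ∈ Set.Icc (0:ℝ) 1, HasDerivAt u
        (c * r / (1 - t * r) - (z * w ((t:ℝ) * z)).re) t := by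
      intro t ht
      have htm := hmem t ht
      have htr1 : t * r < 1 := htr t ht
      have hF : HasDerivAt (fun s : ℝ => deriv f ((s:ℝ) * z))
          (z * iteratedDeriv 2 f ((t:ℝ) * z)) t := by
        have hmulz : HasDerivAt (fun ζ : ℂ => ζ * z) ((1:ℂ) * z) (((t:ℝ)):ℂ) :=
          (hasDerivAt_id _).mul_const z
        have hout : HasDerivAt (deriv f) (iteratedDeriv 2 f ((t:ℝ) * z)) (((t:ℝ):ℂ) * z) := by
          have h := ((hA1 _ htm).differentiableAt).hasDerivAt
          rwa [← e2] at h
        have hcomp := (hout.comp (((t:ℝ)):ℂ) hmulz).comp_ofReal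
        simpa [Function.comp, mul_comm] using hcomp
      have hFne : deriv f ((t:ℝ) * z) ≠ 0 := hne _ htm
      have hnsq : Complex.normSq (deriv f ((t:ℝ) * z)) ≠ 0 := by
        rwa [ne_eq, Complex.normSq_eq_zero]
      have hre' : HasDerivAt (fun s : ℝ => (deriv f ((s:ℝ) * z)).re)
          ((z * iteratedDeriv 2 f ((t:ℝ) * z)).re) t := by
        have h := Complex.reCLM.hasFDerivAt.comp_hasDerivAt t hF
        simpa [Function.comp_def] using h
      have him' : HasDerivAt (fun s : ℝ => (deriv f ((s:ℝ) * z)).im)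
          ((z * iteratedDeriv 2 f ((t:ℝ) * z)).im) t := by
        have h := Complex.imCLM.hasFDerivAt.comp_hasDerivAt t hF
        simpa [Function.comp_def] using h
      have hN : HasDerivAt (fun s : ℝ => Complex.normSq (deriv f ((s:ℝ) * z)))
          ((z * iteratedDeriv 2 f ((t:ℝ) * z)).re * (deriv f ((t:ℝ) * z)).re
            + (deriv f ((t:ℝ) * z)).re * (z * iteratedDeriv 2 f ((t:ℝ) * z)).re
            + ((z * iteratedDeriv 2 f ((t:ℝ) * z)).im * (deriv f ((t:ℝ) * z)).im
            + (deriv f ((t:ℝ) * z)).im * (z * iteratedDeriv 2 f ((t:ℝ) * z)).im)) t := by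
        have h := (hre'.mul hre').add (him'.mul him')
        have e : (fun s : ℝ => Complex.normSq (deriv f ((s:ℝ) * z)))
            = fun s : ℝ => (deriv f ((s:ℝ) * z)).re * (deriv f ((s:ℝ) * z)).re
              + (deriv f ((s:ℝ) * z)).im * (deriv f ((s:ℝ) * z)).im := by
          funext s; rw [Complex.normSq_apply]
        rw [e]
        exact h
      have hlog : HasDerivAt
          (fun s : ℝ => Real.log (Complex.normSq (deriv f ((s:ℝ) * z))))
          (((z * iteratedDeriv 2 f ((t:ℝ) * z)).re * (deriv f ((t:ℝ) * z)).re
            + (deriv f ((t:ℝ) * z)).re * (z * iteratedDeriv 2 f ((t:ℝ) * z)).re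
            + ((z * iteratedDeriv 2 f ((t:ℝ) * z)).im * (deriv f ((t:ℝ) * z)).im
            + (deriv f ((t:ℝ) * z)).im * (z * iteratedDeriv 2 f ((t:ℝ) * z)).im))
            / Complex.normSq (deriv f ((t:ℝ) * z))) t := hN.log hnsq
      have h1r : (1 : ℝ) - t * r ≠ 0 := by linarith
      have hlin : HasDerivAt (fun s : ℝ => 1 - s * r) (-r) t := by
        have h := ((hasDerivAt_id t).mul_const r).const_sub 1
        simpa using h
      have hlog2 : HasDerivAt (fun s : ℝ => Real.log (1 - s * r))
          (-r / (1 - t * r)) t := hlin.log h1r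
      have hcomb := (hlog2.const_mul (-c)).sub (hlog.const_mul ((1:ℝ)/2))
      have hval : -c * (-r / (1 - t * r)) - 1 / 2 *
          (((z * iteratedDeriv 2 f ((t:ℝ) * z)).re * (deriv f ((t:ℝ) * z)).re
            + (deriv f ((t:ℝ) * z)).re * (z * iteratedDeriv 2 f ((t:ℝ) * z)).re
            + ((z * iteratedDeriv 2 f ((t:ℝ) * z)).im * (deriv f ((t:ℝ) * z)).im
            + (deriv f ((t:ℝ) * z)).im * (z * iteratedDeriv 2 f ((t:ℝ) * z)).im))
            / Complex.normSq (deriv f ((t:ℝ) * z)))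
          = c * r / (1 - t * r) - (z * w ((t:ℝ) * z)).re := by
        have hwre : (z * w ((t:ℝ) * z)).re
            = ((z * iteratedDeriv 2 f ((t:ℝ) * z)).re * (deriv f ((t:ℝ) * z)).re
              + (z * iteratedDeriv 2 f ((t:ℝ) * z)).im * (deriv f ((t:ℝ) * z)).im)
              / Complex.normSq (deriv f ((t:ℝ) * z)) := by
          simp only [hw]
          rw [← mul_div_assoc, Complex.div_re]
          ring
        rw [hwre]
        field_simp
        ring
      rw [hval] at hcomb
      exact hcomb
    have hmono : MonotoneOn u (Set.Icc (0:ℝ) 1) := by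
      apply monotoneOn_of_deriv_nonneg (convex_Icc 0 1)
      · intro t ht
        exact (hder t ht).continuousAt.continuousWithinAt
      · rw [interior_Icc]
        intro t ht
        exact (hder t (Set.mem_Icc_of_Ioo ht)).differentiableAt.differentiableWithinAt
      · rw [interior_Icc]
        intro t ht
        have hIcc := Set.mem_Icc_of_Ioo ht
        rw [(hder t hIcc).deriv]
        have htm := hmem t hIcc
        have htr1 : t * r < 1 := htr t hIcc
        have hpos : 0 < 1 - t * r := by linarith
        have hwbd := hwb _ htm
        rw [hts t hIcc] at hwbd
        have h5 : ‖w ((t:ℝ) * z)‖ * (1 - t * r) ≤ c := by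
          rw [hc, le_div_iff₀ hcpos]
          linarith [hwbd]
        have h6 : (z * w ((t:ℝ) * z)).re ≤ r * ‖w ((t:ℝ) * z)‖ := by
          calc (z * w ((t:ℝ) * z)).re ≤ ‖z * w ((t:ℝ) * z)‖ :=
              Complex.re_le_norm _
            _ = r * ‖w ((t:ℝ) * z)‖ := by rw [norm_mul, hr]
        have h7 : r * ‖w ((t:ℝ) * z)‖ ≤ c * r / (1 - t * r) := by
          rw [le_div_iff₀ hpos]
          nlinarith [h5, hr0.le]
        linarith
    have hu01 : u 0 ≤ u 1 :=
      hmono (Set.left_mem_Icc.mpr zero_le_one) (Set.right_mem_Icc.mpr zero_le_one) zero_le_one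
    have hu0 : u 0 = 0 := by
      simp only [hu]
      norm_num [h1]
    have hu1 : u 1 = -c * Real.log (1 - r)
        - (1 / 2) * Real.log (Complex.normSq (deriv f z)) := by
      simp only [hu]
      norm_num
    rw [hu0, hu1] at hu01
    have habs : 0 < ‖deriv f z‖ := norm_pos_iff.mpr (hne z hz)
    have hlogabs : Real.log (‖deriv f z‖) ≤ Real.log (1 - r) * (-c) := by
      have e : Complex.normSq (deriv f z) = ‖deriv f z‖ ^ 2 :=
        (Complex.sq_norm _).symm
      rw [e, Real.log_pow] at hu01
      push_cast at hu01
      linarith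
    have hrpos : 0 < 1 - r := by linarith
    have hexp := Real.exp_le_exp.mpr hlogabs
    rw [Real.exp_log habs] at hexp
    calc ‖deriv f z‖ ≤ Real.exp (Real.log (1 - r) * (-c)) := hexp
      _ = (1 - r) ^ (-c) := (Real.rpow_def_of_pos hrpos _).symm
end

section
/- Let f be holomorphic on the unit disk with f' nonvanishing, and suppose 1 + z f''(z)/f'(z) = ∫_𝕋 (1+λz)/(1−λz) dμ(λ) for a probability measure μ on the unit circle 𝕋. Then for x ∈ (0,1), the quantity A_f(x) = (1/2)(1−x²) f''(x)/f'(x) − x satisfies lim_{x→1⁻} A_f(x) = 2μ({1}) − 1. -/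
open MeasureTheory Complex Filter

theorem stmt_11 (μ : Measure ℂ) [IsProbabilityMeasure μ]
    (hcirc : μ {z : ℂ | ‖z‖ = 1}ᶜ = 0)
    (f : ℂ → ℂ)
    (hd : DifferentiableOn ℂ f (Metric.ball 0 1))
    (hne : ∀ z ∈ Metric.ball (0:ℂ) 1, deriv f z ≠ 0)
    (hrep : ∀ z ∈ Metric.ball (0:ℂ) 1,
      1 + z * iteratedDeriv 2 f z / deriv f z =
        ∫ l, (1 + l * z) / (1 - l * z) ∂μ) :
    Tendsto
      (fun x : ℝ =>
        (1/2 : ℂ) * (1 - (x:ℂ) ^ 2) * (iteratedDeriv 2 f x / deriv f x) - (x:ℂ))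
      (nhdsWithin 1 (Set.Ioo 0 1))
      (nhds ((2 * (μ {1}).toReal - 1 : ℝ) : ℂ)) := by
  have hmeas1 : MeasurableSet ({1} : Set ℂ) := measurableSet_singleton 1
  have hae : ∀ᵐ l ∂μ, ‖l‖ = 1 := by
    rw [ae_iff]
    exact hcirc
  set g : ℂ → ℂ := fun l => if l = 1 then 1 else -1 with hg
  -- norm equality on the circle
  have hnormeq : ∀ (l : ℂ), ‖l‖ = 1 → ∀ x : ℝ,
      ‖(1 : ℂ) - l * x‖ = ‖l - (x:ℂ)‖ := by
    intro l hl x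
    have h1 : (1 : ℂ) - l * x = l * (starRingEnd ℂ) (l - (x:ℂ)) := by
      rw [map_sub, Complex.conj_ofReal, mul_sub, Complex.mul_conj]
      rw [Complex.normSq_eq_norm_sq, hl]
      norm_num
    rw [h1, norm_mul, RCLike.norm_conj]
    simp [hl]
  have hdenne : ∀ (l : ℂ), ‖l‖ = 1 → ∀ x : ℝ, 0 < x → x < 1 →
      (1 : ℂ) - l * x ≠ 0 := by
    intro l hl x hx0 hx1 h
    have : ‖l * (x:ℂ)‖ = x := by
      simp [norm_mul, hl, abs_of_pos hx0]
    have h2 : (1:ℂ) = l * x := by linear_combination h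
    rw [← h2] at this
    simp at this
    linarith
  -- dominated convergence
  have key : Tendsto (fun x : ℝ => ∫ l, ((l - (x:ℂ)) / (1 - l * x)) ∂μ)
      (nhdsWithin 1 (Set.Ioo 0 1)) (nhds (∫ l, g l ∂μ)) := by
    apply tendsto_integral_filter_of_dominated_convergence (fun _ => (1:ℝ))
    · exact Filter.Eventually.of_forall fun x =>
        ((measurable_id.sub measurable_const).div
          (measurable_const.sub (measurable_id.mul measurable_const))).aestronglyMeasurable
    · filter_upwards [self_mem_nhdsWithin] with x hx
      filter_upwards [hae] with l hl
      rw [norm_div, hnormeq l hl x]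
      exact div_self_le_one _
    · exact integrable_const 1
    · filter_upwards [hae] with l hl
      by_cases h1 : l = 1
      · subst h1
        simp only [hg, if_pos rfl]
        apply Tendsto.congr' (f₁ := fun _ : ℝ => (1:ℂ))
        · filter_upwards [self_mem_nhdsWithin] with x hx
          have hne1 : (1:ℂ) - (x:ℂ) ≠ 0 := by
            have : (x:ℂ) ≠ 1 := by
              exact_mod_cast ne_of_lt hx.2
            intro h
            apply this
            linear_combination -h
          rw [one_mul, div_self hne1]
        · exact tendsto_const_nhds
      · simp only [hg, if_neg h1]
        have hne1 : (1:ℂ) - l * 1 ≠ 0 := by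
          intro h
          apply h1
          have : l = 1 := by linear_combination -h
          exact this
        have hc : Tendsto (fun x : ℝ => (l - (x:ℂ)) / (1 - l * x)) (nhds 1)
            (nhds ((l - 1) / (1 - l * 1))) := by
          apply Tendsto.div
          · exact tendsto_const_nhds.sub (Complex.continuous_ofReal.tendsto 1)
          · exact tendsto_const_nhds.sub
              (tendsto_const_nhds.mul (Complex.continuous_ofReal.tendsto 1))
          · exact hne1
        have hval : (l - 1) / (1 - l * 1) = -1 := by
          rw [mul_one] at hne1 ⊢
          rw [div_eq_iff hne1]
          ring
        rw [hval] at hc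
        exact hc.mono_left nhdsWithin_le_nhds
  -- value of the limit integral
  have hgval : ∫ l, g l ∂μ = ((2 * (μ {1}).toReal - 1 : ℝ) : ℂ) := by
    have hgdef : g = fun l => Set.indicator ({1} : Set ℂ) (fun _ => (2:ℂ)) l + (-1) := by
      funext l
      by_cases h : l = 1 <;> simp [hg, h, Set.indicator] <;> norm_num
    rw [hgdef, integral_add ((integrable_const (2:ℂ)).indicator hmeas1) (integrable_const _),
      integral_indicator_const _ hmeas1, integral_const]
    simp [Complex.real_smul]
    push_cast
    rw [measureReal_def]
    ring
  -- eventual equality of the given function with the integral of F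
  have heq : ∀ᶠ (x : ℝ) in nhdsWithin (1:ℝ) (Set.Ioo 0 1),
      (∫ l, ((l - (x:ℂ)) / (1 - l * x)) ∂μ) =
      (1/2 : ℂ) * (1 - (x:ℂ) ^ 2) * (iteratedDeriv 2 f x / deriv f x) - (x:ℂ) := by
    filter_upwards [self_mem_nhdsWithin] with x hx
    obtain ⟨hx0, hx1⟩ := hx
    have hX0 : ((x:ℂ)) ≠ 0 := by exact_mod_cast ne_of_gt hx0
    have hball : (x:ℂ) ∈ Metric.ball (0:ℂ) 1 := by
      simp [Complex.dist_eq, Complex.norm_real, abs_of_pos hx0, hx1]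
    have H := hrep (x:ℂ) hball
    set c : ℂ := (1 - (x:ℂ)^2) / (2 * x) with hc
    -- integrability of h
    have hint : Integrable (fun l : ℂ => (1 + l * (x:ℂ)) / (1 - l * x)) μ := by
      apply Integrable.mono' (integrable_const ((1+x)/(1-x)))
      · exact ((measurable_const.add (measurable_id.mul measurable_const)).div
          (measurable_const.sub (measurable_id.mul measurable_const))).aestronglyMeasurable
      · filter_upwards [hae] with l hl
        rw [norm_div]
        have hnum : ‖(1:ℂ) + l * x‖ ≤ 1 + x := by
          calc ‖(1:ℂ) + l * x‖ ≤ ‖(1:ℂ)‖ + ‖l * (x:ℂ)‖ := norm_add_le _ _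
          _ = 1 + x := by simp [norm_mul, hl, abs_of_pos hx0]
        have hden : (1 - x : ℝ) ≤ ‖(1:ℂ) - l * x‖ := by
          have := norm_sub_norm_le (1:ℂ) (l * x)
          have h2 : ‖l * (x:ℂ)‖ = x := by simp [norm_mul, hl, abs_of_pos hx0]
          simp only [norm_one, h2] at this
          linarith
        apply div_le_div₀ (by linarith) hnum (by linarith) hden
    -- a.e. identity
    have haeid : (fun l : ℂ => (l - (x:ℂ)) / (1 - l * x)) =ᵐ[μ]
        (fun l : ℂ => c * ((1 + l * x) / (1 - l * x)) + (-c - x)) := by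
      filter_upwards [hae] with l hl
      have hd := hdenne l hl x hx0 hx1
      rw [hc]
      field_simp
      ring
    rw [integral_congr_ae haeid,
      integral_add (hint.const_mul c) (integrable_const _),
      integral_const_mul, ← H, integral_const]
    simp only [probReal_univ, one_smul]
    rw [hc]
    field_simp
    ring
  have := key.congr' heq
  rwa [hgval] at this
end

section
/- Let f be holomorphic on the unit disk with f' nonvanishing, and suppose 1 + z f''(z)/f'(z) = ∫_𝕋 (1+λz)/(1−λz) dμ(λ) for a probability measure μ on 𝕋. Then for all z in the unit disk, |(1/2)(1−|z|²) f''(z)/f'(z) − conj(z)| ≥ 2μ({1}) − 1. -/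
open MeasureTheory Complex Topology

theorem stmt_12 (μ : Measure ℂ) [IsProbabilityMeasure μ]
    (hcirc : μ {z : ℂ | ‖z‖ = 1}ᶜ = 0)
    (f : ℂ → ℂ)
    (hd : DifferentiableOn ℂ f (Metric.ball 0 1))
    (hne : ∀ z ∈ Metric.ball (0:ℂ) 1, deriv f z ≠ 0)
    (hrep : ∀ z ∈ Metric.ball (0:ℂ) 1,
      1 + z * iteratedDeriv 2 f z / deriv f z =
        ∫ l, (1 + l * z) / (1 - l * z) ∂μ) :
    ∀ z ∈ Metric.ball (0:ℂ) 1,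
      2 * (μ {1}).toReal - 1 ≤
        ‖(1/2 : ℂ) * (1 - (‖z‖ : ℂ) ^ 2) *
          (iteratedDeriv 2 f z / deriv f z) - (starRingEnd ℂ) z‖ := by
  have hae : ∀ᵐ l ∂μ, ‖l‖ = 1 := by
    rw [ae_iff]; exact hcirc
  set c : ℝ := (μ {1}).toReal with hc
  set h : ℂ → ℝ := fun z => ‖(1/2 : ℂ) * (1 - (‖z‖ : ℂ) ^ 2) *
          (iteratedDeriv 2 f z / deriv f z) - (starRingEnd ℂ) z‖ with hh
  -- main estimate for z ≠ 0
  have main : ∀ z ∈ Metric.ball (0:ℂ) 1, z ≠ 0 → 2 * c - 1 ≤ h z := by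
    intro z hz hz0
    have hzlt : ‖z‖ < 1 := by simpa using hz
    have hden : ∀ l : ℂ, ‖l‖ = 1 → (1 : ℂ) - l * z ≠ 0 := by
      intro l hl he
      have hlz : ‖l * z‖ < 1 := by simp [norm_mul, hl, hzlt]
      rw [sub_eq_zero] at he
      rw [← he] at hlz
      simp at hlz
    set g : ℂ → ℂ := fun l => (l - (starRingEnd ℂ) z) / (1 - l * z) with hg
    set F : ℂ → ℂ := fun l => (1 + l * z) / (1 - l * z) with hF
    have hgmeas : AEStronglyMeasurable g μ :=
      ((measurable_id.sub measurable_const).div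
        (measurable_const.sub (measurable_id.mul measurable_const))).aestronglyMeasurable
    have hFmeas : AEStronglyMeasurable F μ :=
      ((measurable_const.add (measurable_id.mul measurable_const)).div
        (measurable_const.sub (measurable_id.mul measurable_const))).aestronglyMeasurable
    have hgabs : ∀ l : ℂ, ‖l‖ = 1 → ‖g l‖ = 1 := by
      intro l hl
      have h1 : (1 : ℂ) - l * z ≠ 0 := hden l hl
      have hll : l * (starRingEnd ℂ) l = 1 := by
        rw [Complex.mul_conj]; norm_cast; simp [← Complex.sq_norm, hl]
      have hkey : (starRingEnd ℂ) (l - (starRingEnd ℂ) z) = (starRingEnd ℂ) l * (1 - l * z) := by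
        rw [map_sub, Complex.conj_conj, mul_sub, mul_one, ← mul_assoc,
          mul_comm ((starRingEnd ℂ) l) l, hll, one_mul]
      have habs : ‖l - (starRingEnd ℂ) z‖ = ‖1 - l * z‖ := by
        rw [← Complex.norm_conj (l - (starRingEnd ℂ) z), hkey, norm_mul, Complex.norm_conj, hl,
          one_mul]
      rw [hg]
      simp only [norm_div, habs, div_self (norm_ne_zero_iff.mpr h1)]
    have hgint : Integrable g μ := by
      refine (integrable_const (1:ℝ)).mono' hgmeas ?_
      filter_upwards [hae] with l hl
      simp [hgabs l hl]
    have hFint : Integrable F μ := by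
      refine (integrable_const (2 / (1 - ‖z‖))).mono' hFmeas ?_
      filter_upwards [hae] with l hl
      have h2 : ‖(1:ℂ) + l * z‖ ≤ 2 := by
        calc ‖(1:ℂ) + l * z‖ ≤ ‖(1:ℂ)‖ + ‖l * z‖ := norm_add_le _ _
        _ ≤ 1 + 1 := by
            simp only [norm_one, norm_mul, hl, one_mul]
            exact add_le_add_right hzlt.le 1
        _ = 2 := by norm_num
      have h3 : 1 - ‖z‖ ≤ ‖(1:ℂ) - l * z‖ := by
        calc 1 - ‖z‖ = ‖(1:ℂ)‖ - ‖l * z‖ := by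
              simp [norm_mul, hl]
        _ ≤ ‖(1:ℂ) - l * z‖ := norm_sub_norm_le _ _
      have h4 : (0:ℝ) < 1 - ‖z‖ := by linarith
      rw [hF]
      simp only [norm_div]
      exact div_le_div₀ (by norm_num) h2 h4 h3
    -- identity: ∫ g = the target expression
    set Q : ℂ := iteratedDeriv 2 f z / deriv f z with hQ
    set A : ℂ := (1/2 : ℂ) * (1 - (‖z‖ : ℂ) ^ 2) * Q - (starRingEnd ℂ) z with hA
    have habs2 : ((‖z‖ : ℂ))^2 = z * (starRingEnd ℂ) z := by
      rw [← Complex.ofReal_pow, Complex.sq_norm, Complex.mul_conj]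
    have hrepz : (∫ l, F l ∂μ) - 1 = z * Q := by
      rw [← hrep z hz]; ring
    have hptwise : ∀ᵐ l ∂μ, z * g l =
        (1 - z * (starRingEnd ℂ) z)/2 * (F l - 1) - z * (starRingEnd ℂ) z := by
      filter_upwards [hae] with l hl
      have h1 : (1 : ℂ) - l * z ≠ 0 := hden l hl
      have h1' : (1 : ℂ) - z * l ≠ 0 := by rwa [mul_comm]
      rw [hg, hF]
      field_simp
      ring
    have hIg : ∫ l, g l ∂μ = A := by
      apply mul_left_cancel₀ hz0
      have e1 : z * ∫ l, g l ∂μ =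
          (1 - z * (starRingEnd ℂ) z)/2 * ((∫ l, F l ∂μ) - 1) - z * (starRingEnd ℂ) z := by
        have hi2 : Integrable (fun l => F l - 1) μ := by
          exact hFint.sub (integrable_const 1)
        have hi1 : Integrable
            (fun l => (1 - z * (starRingEnd ℂ) z)/2 * (F l - 1)) μ := by
          exact hi2.const_mul _
        rw [← integral_const_mul, integral_congr_ae hptwise,
          integral_sub hi1 (integrable_const _), integral_const_mul,
          integral_sub hFint (integrable_const 1)]
        simp [measure_univ]
      rw [e1, hrepz, hA, habs2]
      ring
    -- the lower bound on |∫ g|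
    set w : ℂ := (1 - (starRingEnd ℂ) z) / (1 - z) with hw
    have hz1 : (1:ℂ) - z ≠ 0 := by
      intro he
      rw [sub_eq_zero] at he
      rw [← he] at hzlt
      simp at hzlt
    have hwabs : ‖w‖ = 1 := by
      rw [hw, norm_div]
      have : (1 : ℂ) - (starRingEnd ℂ) z = (starRingEnd ℂ) (1 - z) := by
        rw [map_sub, map_one]
      rw [this, Complex.norm_conj, div_self (norm_ne_zero_iff.mpr hz1)]
    set φ : ℂ → ℝ := fun l => ((starRingEnd ℂ) w * g l).re with hφ
    set ψ : ℂ → ℝ := fun l => Set.indicator {(1:ℂ)} (fun _ => (2:ℝ)) l - 1 with hψ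
    have hφint : Integrable φ μ := by
      refine (integrable_const (1:ℝ)).mono'
        ((Complex.measurable_re.comp (measurable_const.mul
          ((measurable_id.sub measurable_const).div
            (measurable_const.sub (measurable_id.mul measurable_const))))).aestronglyMeasurable) ?_
      filter_upwards [hae] with l hl
      rw [hφ]
      calc ‖((starRingEnd ℂ) w * g l).re‖ ≤ ‖(starRingEnd ℂ) w * g l‖ := by
            rw [Real.norm_eq_abs]; exact Complex.abs_re_le_norm _
      _ = 1 := by rw [norm_mul, Complex.norm_conj, hwabs, hgabs l hl, one_mul]
    have hψint : Integrable ψ μ :=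
      ((integrable_const (2:ℝ)).indicator (measurableSet_singleton (1:ℂ))).sub
        (integrable_const 1)
    have hψφ : ψ ≤ᵐ[μ] φ := by
      filter_upwards [hae] with l hl
      by_cases hl1 : l = 1
      · subst hl1
        have hg1 : g 1 = w := by rw [hg, hw]; simp
        have hφ1 : φ 1 = Complex.normSq w := by
          rw [hφ]
          simp only [hg1]
          rw [mul_comm, Complex.mul_conj, Complex.ofReal_re]
        have hn1 : Complex.normSq w = 1 := by
          rw [← Complex.sq_norm, hwabs]; norm_num
        rw [hφ1, hn1, hψ]
        simp
        norm_num
      · have hψl : ψ l = -1 := by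
          rw [hψ]; simp [Set.indicator_of_notMem, hl1]
        rw [hψl, hφ]
        have habs1 : ‖(starRingEnd ℂ) w * g l‖ = 1 := by
          rw [norm_mul, Complex.norm_conj, hwabs, hgabs l hl, one_mul]
        have := Complex.abs_re_le_norm ((starRingEnd ℂ) w * g l)
        rw [habs1] at this
        have := abs_le.mp this
        linarith [this.1]
    have hψval : ∫ l, ψ l ∂μ = 2 * c - 1 := by
      rw [hψ]
      rw [integral_sub ((integrable_const (2:ℝ)).indicator (measurableSet_singleton (1:ℂ)))
        (integrable_const 1),
        integral_indicator_const _ (measurableSet_singleton (1:ℂ)), integral_const]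
      simp [measure_univ, hc, mul_comm, measureReal_def]
    have hφval : ∫ l, φ l ∂μ = ((starRingEnd ℂ) w * ∫ l, g l ∂μ).re := by
      rw [hφ, ← integral_const_mul]
      exact integral_re (hgint.const_mul _)
    have hstep : 2 * c - 1 ≤ ((starRingEnd ℂ) w * ∫ l, g l ∂μ).re := by
      rw [← hφval, ← hψval]
      exact integral_mono_ae hψint hφint hψφ
    have hfinal : ((starRingEnd ℂ) w * ∫ l, g l ∂μ).re ≤ ‖∫ l, g l ∂μ‖ := by
      calc ((starRingEnd ℂ) w * ∫ l, g l ∂μ).re ≤ ‖(starRingEnd ℂ) w * ∫ l, g l ∂μ‖ :=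
            Complex.re_le_norm _
      _ = ‖∫ l, g l ∂μ‖ := by
          rw [norm_mul, Complex.norm_conj, hwabs, one_mul]
    have : h z = ‖∫ l, g l ∂μ‖ := by rw [hh, hIg]
    rw [this]
    linarith
  -- conclude, treating z = 0 by continuity
  intro z hz
  rcases eq_or_ne z 0 with rfl | hz0
  · -- continuity argument at 0
    have h0 : (0:ℂ) ∈ Metric.ball (0:ℂ) 1 := by simp
    have han : AnalyticOnNhd ℂ f (Metric.ball 0 1) := hd.analyticOnNhd Metric.isOpen_ball
    have han1 : AnalyticOnNhd ℂ (deriv f) (Metric.ball 0 1) := han.deriv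
    have han2 : AnalyticOnNhd ℂ (deriv (deriv f)) (Metric.ball 0 1) := han1.deriv
    have hit : iteratedDeriv 2 f = deriv (deriv f) := by
      rw [iteratedDeriv_succ, iteratedDeriv_one]
    have hQcont : ContinuousAt (fun u => iteratedDeriv 2 f u / deriv f u) 0 := by
      rw [hit]
      exact ((han2 0 h0).continuousAt).div ((han1 0 h0).continuousAt) (hne 0 h0)
    have hinner : ContinuousAt (fun u : ℂ => (1/2 : ℂ) * (1 - (‖u‖ : ℂ) ^ 2) *
        (iteratedDeriv 2 f u / deriv f u) - (starRingEnd ℂ) u) 0 := by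
      have hsq : ContinuousAt (fun u : ℂ => ((‖u‖ : ℂ))^2) 0 :=
        (((Complex.continuous_ofReal.comp continuous_norm).pow 2).continuousAt)
      exact ((continuousAt_const.mul (continuousAt_const.sub hsq)).mul hQcont).sub
        (Complex.continuous_conj.continuousAt)
    have hhcont : ContinuousAt h 0 := continuous_norm.continuousAt.comp hinner
    have htend : Filter.Tendsto h (𝓝[≠] (0:ℂ)) (𝓝 (h 0)) :=
      hhcont.tendsto.mono_left nhdsWithin_le_nhds
    refine ge_of_tendsto htend ?_
    have hball : ∀ᶠ u in 𝓝 (0:ℂ), u ∈ Metric.ball (0:ℂ) 1 :=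
      Metric.isOpen_ball.mem_nhds h0
    filter_upwards [eventually_nhdsWithin_of_eventually_nhds hball, self_mem_nhdsWithin]
      with u hu hu0
    exact main u hu hu0
  · exact main z hz hz0
end

section
/- Let t ∈ (0,1] and define f on the unit disk by f(z) = t·z/(1−z)² + ((1−t)/2)·log((1+z)/(1−z)). Then f does not belong to the Hardy space H^{1/2}. -/
open Complex

lemma abs_exp_I_sub_one_le (θ : ℝ) (hθ : 0 ≤ θ) :
    ‖Complex.exp (θ * Complex.I) - 1‖ ≤ θ := by
  have hre : (Complex.exp (θ * Complex.I) - 1).re = Real.cos θ - 1 := by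
    simp [Complex.exp_ofReal_mul_I_re]
  have him : (Complex.exp (θ * Complex.I) - 1).im = Real.sin θ := by
    simp [Complex.exp_ofReal_mul_I_im]
  rw [Complex.norm_def, Complex.normSq_apply, hre, him]
  have h1 : Real.sin θ ^ 2 + Real.cos θ ^ 2 = 1 := Real.sin_sq_add_cos_sq θ
  have h2 : 1 - θ ^ 2 / 2 ≤ Real.cos θ := Real.one_sub_sq_div_two_le_cos
  have h3 : (Real.cos θ - 1) * (Real.cos θ - 1) + Real.sin θ * Real.sin θ ≤ θ ^ 2 := by
    nlinarith [Real.cos_le_one θ]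
  calc Real.sqrt ((Real.cos θ - 1) * (Real.cos θ - 1) + Real.sin θ * Real.sin θ)
      ≤ Real.sqrt (θ ^ 2) := Real.sqrt_le_sqrt h3
    _ = θ := by rw [Real.sqrt_sq hθ]

lemma key_lower (t r θ : ℝ) (ht0 : 0 < t) (ht1 : t ≤ 1) (hr : 1/2 ≤ r) (hr1 : r < 1)
    (hθ0 : 1 - r ≤ θ) (hθ2 : θ^2 ≤ 1 - r)
    (hL : Real.log (2/(1-r)) + Real.pi ≤ t/(8*(1-r))) :
    Real.sqrt t / (4*θ) ≤
      Real.sqrt (‖(t:ℂ) * ((r:ℂ) * Complex.exp (θ*Complex.I)) /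
          (1 - (r:ℂ)*Complex.exp (θ*Complex.I))^2 +
        ((1-(t:ℂ))/2) * Complex.log ((1 + (r:ℂ)*Complex.exp (θ*Complex.I)) /
          (1 - (r:ℂ)*Complex.exp (θ*Complex.I)))‖) := by
  set ε : ℝ := 1 - r with hεdef
  have hε0 : 0 < ε := by simp [hεdef]; linarith
  have hε : ε ≤ 1/2 := by simp [hεdef]; linarith
  have hθpos : 0 < θ := lt_of_lt_of_le hε0 hθ0
  have hr0 : (0:ℝ) ≤ r := by linarith
  set z : ℂ := (r:ℂ) * Complex.exp (θ*Complex.I) with hzdef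
  have habs_z : ‖z‖ = r := by
    rw [hzdef, norm_mul, Complex.norm_real, Real.norm_eq_abs, Complex.norm_exp_ofReal_mul_I,
      _root_.abs_of_nonneg hr0, mul_one]
  have hexp : ‖Complex.exp (θ*Complex.I) - 1‖ ≤ θ :=
    abs_exp_I_sub_one_le θ hθpos.le
  -- |1 - z| ≤ 2θ
  have h1z_le : ‖1 - z‖ ≤ 2*θ := by
    have heq : (1:ℂ) - z = ((1:ℂ) - r) + (r:ℂ) * (1 - Complex.exp (θ*Complex.I)) := by
      rw [hzdef]; ring
    rw [heq]
    calc ‖((1:ℂ) - r) + (r:ℂ) * (1 - Complex.exp (θ*Complex.I))‖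
        ≤ ‖(1:ℂ) - r‖ + ‖(r:ℂ) * (1 - Complex.exp (θ*Complex.I))‖ := by
          exact norm_add_le _ _
      _ ≤ ε + r * θ := by
          rw [norm_mul, Complex.norm_real, Real.norm_eq_abs, _root_.abs_of_nonneg hr0]
          have h1 : ‖(1:ℂ) - (r:ℂ)‖ = ε := by
            rw [show ((1:ℂ) - (r:ℂ)) = ((ε:ℝ):ℂ) by push_cast [hεdef]; ring,
              Complex.norm_real, Real.norm_eq_abs, _root_.abs_of_nonneg hε0.le]
          have h2 : ‖1 - Complex.exp (θ*Complex.I)‖ ≤ θ := by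
            rw [norm_sub_rev]; exact hexp
          rw [h1]
          have : r * ‖1 - Complex.exp (θ*Complex.I)‖ ≤ r * θ :=
            mul_le_mul_of_nonneg_left h2 hr0
          linarith
      _ ≤ 2*θ := by nlinarith
  -- ε ≤ |1 - z|
  have hcos := Real.cos_le_one θ
  have hncos := Real.neg_one_le_cos θ
  have hz_re : z.re = r * Real.cos θ := by
    rw [hzdef]
    simp [Complex.mul_re, Complex.exp_ofReal_mul_I_re, Complex.exp_ofReal_mul_I_im]
  have h1z_ge : ε ≤ ‖1 - z‖ := by
    have h1 : ((1:ℂ) - z).re = 1 - r * Real.cos θ := by simp [hz_re]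
    have h2 := Complex.re_le_norm ((1:ℂ) - z)
    rw [h1] at h2
    nlinarith
  have h1pz_ge : ε ≤ ‖1 + z‖ := by
    have h1 : ((1:ℂ) + z).re = 1 + r * Real.cos θ := by simp [hz_re]
    have h2 := Complex.re_le_norm ((1:ℂ) + z)
    rw [h1] at h2
    nlinarith
  have h1z_le2 : ‖1 - z‖ ≤ 2 := by
    have h := norm_sub_le (1:ℂ) z
    rw [habs_z] at h
    simp only [norm_one] at h ⊢
    linarith
  have h1pz_le2 : ‖1 + z‖ ≤ 2 := by
    calc ‖1 + z‖ ≤ ‖1‖ + ‖z‖ := norm_add_le _ _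
      _ = 1 + r := by rw [habs_z, norm_one]
      _ ≤ 2 := by linarith
  have h1z_pos : 0 < ‖1 - z‖ := lt_of_lt_of_le hε0 h1z_ge
  -- bounds on w = (1+z)/(1-z)
  set w : ℂ := (1 + z) / (1 - z) with hwdef
  have habs_w : ‖w‖ = ‖1 + z‖ / ‖1 - z‖ := norm_div _ _
  have hw_le : ‖w‖ ≤ 2/ε := by
    rw [habs_w]
    exact div_le_div₀ (by norm_num) h1pz_le2 hε0 h1z_ge
  have hw_ge : ε/2 ≤ ‖w‖ := by
    rw [habs_w]
    exact div_le_div₀ (by linarith) h1pz_ge h1z_pos h1z_le2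
  have hw_pos : 0 < ‖w‖ := lt_of_lt_of_le (by linarith) hw_ge
  -- |log w| ≤ log(2/ε) + π
  have hlog2ε : 0 ≤ Real.log (2/ε) := Real.log_nonneg (by rw [le_div_iff₀ hε0]; linarith)
  have hlog : ‖Complex.log w‖ ≤ Real.log (2/ε) + Real.pi := by
    calc ‖Complex.log w‖ ≤ |(Complex.log w).re| + |(Complex.log w).im| :=
          Complex.norm_le_abs_re_add_abs_im _
      _ ≤ Real.log (2/ε) + Real.pi := by
          rw [Complex.log_re, Complex.log_im]
          have harg := Complex.abs_arg_le_pi w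
          have hub : Real.log (‖w‖) ≤ Real.log (2/ε) :=
            Real.log_le_log hw_pos hw_le
          have hlb : -Real.log (2/ε) ≤ Real.log (‖w‖) := by
            have : Real.log (ε/2) ≤ Real.log (‖w‖) :=
              Real.log_le_log (by linarith) hw_ge
            have heq : Real.log (ε/2) = -Real.log (2/ε) := by
              rw [← Real.log_inv, inv_div]
            linarith
          have : |Real.log (‖w‖)| ≤ Real.log (2/ε) := abs_le.2 ⟨hlb, hub⟩
          linarith
  -- main term lower bound
  have hterm1 : t*r/(4*θ^2) ≤ ‖(t:ℂ) * z / (1 - z)^2‖ := by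
    have habst : ‖(t:ℂ)‖ = t := by
      rw [Complex.norm_real, Real.norm_eq_abs, _root_.abs_of_nonneg ht0.le]
    rw [norm_div, norm_mul, norm_pow, habs_z, habst]
    have hsq : ‖1 - z‖^2 ≤ 4*θ^2 := by
      nlinarith [norm_nonneg (1-z)]
    have hsqpos : 0 < ‖1 - z‖^2 := by positivity
    exact div_le_div_of_nonneg_left (by positivity) hsqpos hsq
  -- log term upper bound
  have hterm2 : ‖((1-(t:ℂ))/2) * Complex.log w‖ ≤ (Real.log (2/ε) + Real.pi)/2 := by
    rw [norm_mul, norm_div]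
    have h1 : ‖(1:ℂ) - (t:ℂ)‖ = 1 - t := by
      rw [show ((1:ℂ) - (t:ℂ)) = (((1-t:ℝ)):ℂ) by push_cast; ring,
        Complex.norm_real, Real.norm_eq_abs, _root_.abs_of_nonneg (by linarith)]
    rw [h1]
    have h2 : ‖(2:ℂ)‖ = 2 := by norm_num
    rw [h2]
    have hπ := Real.pi_pos
    calc (1-t)/2 * ‖Complex.log w‖
        ≤ (1/2) * (Real.log (2/ε) + Real.pi) := by
          apply mul_le_mul (by linarith) hlog (norm_nonneg _) (by norm_num)
      _ = (Real.log (2/ε) + Real.pi)/2 := by ring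
  -- combine
  have hθsq : 0 < θ^2 := by positivity
  have habs_sum : t/(16*θ^2) ≤ ‖(t:ℂ) * z / (1 - z)^2 +
      ((1-(t:ℂ))/2) * Complex.log w‖ := by
    have htri : ‖(t:ℂ) * z / (1 - z)^2‖
        ≤ ‖(t:ℂ) * z / (1 - z)^2 + ((1-(t:ℂ))/2) * Complex.log w‖
          + ‖((1-(t:ℂ))/2) * Complex.log w‖ := by
      have := norm_add_le ((t:ℂ) * z / (1 - z)^2 + ((1-(t:ℂ))/2) * Complex.log w)
        (-(((1-(t:ℂ))/2) * Complex.log w))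
      simpa using this
    have hB : (Real.log (2/ε) + Real.pi)/2 ≤ t/(16*θ^2) := by
      have h1 : t/(8*ε) ≤ t/(8*θ^2) := by gcongr
      have h2 : t/(8*θ^2) = 2*(t/(16*θ^2)) := by ring
      linarith
    have hC2 : t/(8*θ^2) ≤ t*r/(4*θ^2) := by
      have h3 : t/(8*θ^2) = (t*(1/2))/(4*θ^2) := by ring
      rw [h3]
      gcongr
    have hhalf : t/(8*θ^2) = t/(16*θ^2) + t/(16*θ^2) := by ring
    linarith
  calc Real.sqrt t / (4*θ) = Real.sqrt (t/(16*θ^2)) := by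
        rw [Real.sqrt_div ht0.le, show (16*θ^2) = (4*θ)^2 by ring,
          Real.sqrt_sq (by linarith)]
    _ ≤ _ := Real.sqrt_le_sqrt habs_sum

theorem stmt_13 (t : ℝ) (ht : t ∈ Set.Ioc (0:ℝ) 1) :
    ¬ InHardy (1/2)
      (fun z => (t:ℂ) * z / (1 - z) ^ 2 +
        ((1 - (t:ℂ)) / 2) * Complex.log ((1 + z) / (1 - z))) := by
  obtain ⟨ht0, ht1⟩ := ht
  rintro ⟨hdiff, C, hC⟩
  have hst : 0 < Real.sqrt t := Real.sqrt_pos.2 ht0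
  set A : ℝ := max (max 2 ((16*Real.sqrt 2 + 8*Real.pi)/t))
      (Real.exp ((4*max C 0 + 4)/Real.sqrt t)) with hAdef
  have hA2 : 2 ≤ A := le_trans (le_max_left _ _) (le_max_left _ _)
  have hAb : (16*Real.sqrt 2 + 8*Real.pi)/t ≤ A :=
    le_trans (le_max_right _ _) (le_max_left _ _)
  have hAc : Real.exp ((4*max C 0 + 4)/Real.sqrt t) ≤ A := le_max_right _ _
  have hA0 : 0 < A := by linarith
  set δ : ℝ := A⁻¹ with hδdef
  have hδ0 : 0 < δ := inv_pos.2 hA0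
  have hδh : δ ≤ 1/2 := by
    rw [hδdef]
    rw [inv_le_comm₀ (by linarith) (by norm_num)]
    simpa using hA2
  have hδA : δ * A = 1 := inv_mul_cancel₀ (ne_of_gt hA0)
  set r : ℝ := 1 - δ^2 with hrdef
  have hr0 : (0:ℝ) ≤ r := by nlinarith
  have hr1 : r < 1 := by nlinarith
  have hrh : 1/2 ≤ r := by nlinarith
  have hεr : 1 - r = δ^2 := by rw [hrdef]; ring
  -- the L condition
  have hL : Real.log (2/(1-r)) + Real.pi ≤ t/(8*(1-r)) := by
    rw [hεr]
    have hs2 : Real.sqrt (2/δ^2) = Real.sqrt 2 * A := by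
      rw [Real.sqrt_div (by norm_num), Real.sqrt_sq hδ0.le, hδdef, div_eq_mul_inv, inv_inv]
    have hlog : Real.log (2/δ^2) ≤ 2 * (Real.sqrt 2 * A) := by
      have h1 : Real.log (2/δ^2) = 2 * Real.log (Real.sqrt (2/δ^2)) := by
        rw [Real.log_sqrt (by positivity)]; ring
      have h2 : Real.log (Real.sqrt (2/δ^2)) ≤ Real.sqrt (2/δ^2) := by
        have := Real.add_one_le_exp (Real.log (Real.sqrt (2/δ^2)))
        rw [Real.exp_log (by positivity)] at this
        linarith
      rw [h1, hs2]
      linarith [hs2 ▸ h2]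
    have htA : 16*Real.sqrt 2 + 8*Real.pi ≤ t * A := by
      rw [div_le_iff₀ ht0] at hAb; linarith
    have hδ2 : t/(8*δ^2) = t * A^2 / 8 := by
      rw [hδdef]; field_simp
    rw [hδ2]
    have hπ := Real.pi_pos
    nlinarith [Real.sqrt_nonneg 2]
  -- continuity of the integrand
  set F : ℂ → ℂ := fun z => (t:ℂ) * z / (1 - z) ^ 2 +
      ((1 - (t:ℂ)) / 2) * Complex.log ((1 + z) / (1 - z)) with hFdef
  set g : ℝ → ℝ := fun θ => Real.sqrt (‖F ((r:ℂ) * Complex.exp (θ * Complex.I))‖)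
    with hgdef
  have hφcont : Continuous (fun θ : ℝ => (r:ℂ) * Complex.exp (θ * Complex.I)) :=
    continuous_const.mul (Complex.continuous_exp.comp
      (Complex.continuous_ofReal.mul continuous_const))
  have hmaps : ∀ θ : ℝ, (r:ℂ) * Complex.exp (θ * Complex.I) ∈ Metric.ball (0:ℂ) 1 := by
    intro θ
    rw [Metric.mem_ball, dist_zero_right, norm_mul,
      Complex.norm_real, Real.norm_eq_abs, Complex.norm_exp_ofReal_mul_I, _root_.abs_of_nonneg hr0, mul_one]
    exact hr1
  have hgcont : Continuous g := by
    apply Real.continuous_sqrt.comp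
    apply continuous_norm.comp
    exact hdiff.continuousOn.comp_continuous hφcont hmaps
  -- the hypothesis in sqrt form
  have hC' : (∫ θ in (0:ℝ)..(2 * Real.pi), g θ) ≤ C := by
    have h := hC r hr0 hr1
    have heq : (∫ θ in (0:ℝ)..(2 * Real.pi), g θ)
        = ∫ θ in (0:ℝ)..(2 * Real.pi),
            ‖F ((r:ℂ) * Complex.exp (θ * Complex.I))‖ ^ ((1:ℝ)/2) := by
      apply intervalIntegral.integral_congr
      intro θ _
      simp only [hgdef, Real.sqrt_eq_rpow]
    rw [heq]
    exact h
  -- lower bound the integral over [δ², δ]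
  have hδδ : δ^2 ≤ δ := by nlinarith
  have hδ2π : δ ≤ 2 * Real.pi := by
    have := Real.pi_gt_three
    linarith
  have hmono : ∀ θ ∈ Set.Icc (δ^2) δ, Real.sqrt t / 4 * θ⁻¹ ≤ g θ := by
    intro θ hθ
    obtain ⟨hθ1, hθ2⟩ := hθ
    have hθpos : 0 < θ := lt_of_lt_of_le (by positivity) hθ1
    have h := key_lower t r θ ht0 ht1 hrh hr1 (hεr ▸ hθ1)
      (by rw [hεr]; nlinarith) hL
    rw [hgdef, hFdef]
    have heq : Real.sqrt t / 4 * θ⁻¹ = Real.sqrt t / (4*θ) := by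
      field_simp
    rw [heq]
    exact h
  have hint1 : IntervalIntegrable (fun θ : ℝ => Real.sqrt t / 4 * θ⁻¹) MeasureTheory.volume
      (δ^2) δ := by
    apply ContinuousOn.intervalIntegrable
    apply ContinuousOn.mul continuousOn_const
    apply ContinuousOn.inv₀ continuousOn_id
    intro x hx
    rw [Set.uIcc_of_le hδδ] at hx
    exact ne_of_gt (lt_of_lt_of_le (by positivity) hx.1)
  have hlow : Real.sqrt t / 4 * Real.log A ≤ ∫ θ in (δ^2)..δ, g θ := by
    have h1 : (∫ θ in (δ^2)..δ, Real.sqrt t / 4 * θ⁻¹) ≤ ∫ θ in (δ^2)..δ, g θ :=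
      intervalIntegral.integral_mono_on hδδ hint1 (hgcont.intervalIntegrable _ _) hmono
    have h2 : (∫ θ in (δ^2)..δ, Real.sqrt t / 4 * θ⁻¹)
        = Real.sqrt t / 4 * Real.log A := by
      rw [intervalIntegral.integral_const_mul, integral_inv]
      · congr 1
        rw [show δ / δ^2 = δ⁻¹ by field_simp, hδdef, inv_inv]
      · rw [Set.uIcc_of_le hδδ]
        intro h
        exact absurd h.1 (by simp; positivity)
    linarith [h2 ▸ h1]
  -- split the full integral
  have hsplit : (∫ θ in (δ^2)..δ, g θ) ≤ ∫ θ in (0:ℝ)..(2 * Real.pi), g θ := by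
    have i1 := (hgcont.intervalIntegrable (μ := MeasureTheory.volume) (0:ℝ) (δ^2))
    have i2 := (hgcont.intervalIntegrable (μ := MeasureTheory.volume) (δ^2) δ)
    have i3 := (hgcont.intervalIntegrable (μ := MeasureTheory.volume) δ (2*Real.pi))
    have e1 : (∫ θ in (0:ℝ)..(δ^2), g θ) + (∫ θ in (δ^2)..δ, g θ)
        = ∫ θ in (0:ℝ)..δ, g θ :=
      intervalIntegral.integral_add_adjacent_intervals i1 i2
    have e2 : (∫ θ in (0:ℝ)..δ, g θ) + (∫ θ in δ..(2*Real.pi), g θ)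
        = ∫ θ in (0:ℝ)..(2*Real.pi), g θ :=
      intervalIntegral.integral_add_adjacent_intervals (i1.trans i2) i3
    have n1 : 0 ≤ ∫ θ in (0:ℝ)..(δ^2), g θ :=
      intervalIntegral.integral_nonneg (by positivity) (fun u _ => Real.sqrt_nonneg _)
    have n3 : 0 ≤ ∫ θ in δ..(2*Real.pi), g θ :=
      intervalIntegral.integral_nonneg hδ2π (fun u _ => Real.sqrt_nonneg _)
    linarith
  -- conclude
  have hlogA : (4*max C 0 + 4)/Real.sqrt t ≤ Real.log A := by
    have := Real.log_le_log (Real.exp_pos _) hAc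
    rwa [Real.log_exp] at this
  have hfin : max C 0 + 1 ≤ Real.sqrt t / 4 * Real.log A := by
    have h1 : Real.sqrt t / 4 * ((4*max C 0 + 4)/Real.sqrt t) = max C 0 + 1 := by
      field_simp
    calc max C 0 + 1 = Real.sqrt t / 4 * ((4*max C 0 + 4)/Real.sqrt t) := h1.symm
      _ ≤ Real.sqrt t / 4 * Real.log A := by
          apply mul_le_mul_of_nonneg_left hlogA (by positivity)
  have : C < max C 0 + 1 := lt_of_le_of_lt (le_max_left C 0) (by linarith)
  linarith
end

section
/- Let f be holomorphic on the unit disk with f(0) = 0, f'(0) = 1, f''(0) = 0, and suppose there exists τ on the unit circle such that g(z) = (τ − z)(1 − conj(τ)·z)·f'(z) has positive real part on the disk. Then f'(z) = 1/(1 − z²) for all z in the disk, and hence f(z) = (1/2)·log((1+z)/(1−z)). -/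
open Complex Metric Set

private lemma aux_normSq_lt {w c : ℂ} (hc : 0 < c.re) (hw : 0 < w.re) :
    Complex.normSq (w - c) < Complex.normSq (w + (starRingEnd ℂ) c) := by
  simp only [Complex.normSq_apply, Complex.sub_re, Complex.sub_im, Complex.add_re,
    Complex.add_im, Complex.conj_re, Complex.conj_im]
  nlinarith

theorem stmt_14 (f : ℂ → ℂ)
    (hd : DifferentiableOn ℂ f (Metric.ball 0 1))
    (h0 : f 0 = 0) (h1 : deriv f 0 = 1) (h2 : iteratedDeriv 2 f 0 = 0)
    (τ : ℂ) (hτ : ‖τ‖ = 1)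
    (hre : ∀ z ∈ Metric.ball (0:ℂ) 1,
      0 < ((τ - z) * (1 - (starRingEnd ℂ) τ * z) * deriv f z).re) :
    ∀ z ∈ Metric.ball (0:ℂ) 1,
      deriv f z = 1 / (1 - z ^ 2) ∧
      f z = (1/2 : ℂ) * Complex.log ((1 + z) / (1 - z)) := by
  have h0mem : (0:ℂ) ∈ ball (0:ℂ) 1 := by simp
  have hτ2 : τ * (starRingEnd ℂ) τ = 1 := by
    rw [Complex.mul_conj]
    rw [Complex.normSq_eq_norm_sq, hτ]; norm_num
  set g : ℂ → ℂ := fun z => (τ - z) * (1 - (starRingEnd ℂ) τ * z) * deriv f z with hgdef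
  have hfa : AnalyticOnNhd ℂ f (ball 0 1) := hd.analyticOnNhd isOpen_ball
  have hdf : DifferentiableOn ℂ (deriv f) (ball 0 1) := hfa.deriv.differentiableOn
  have hgd : DifferentiableOn ℂ g (ball 0 1) := by
    apply DifferentiableOn.mul _ hdf
    fun_prop
  have hg0 : g 0 = τ := by simp [hgdef, h1]
  have ha : 0 < τ.re := by
    have := hre 0 h0mem; simpa [h1] using this
  have hale : τ.re ≤ 1 := by
    calc τ.re ≤ ‖τ‖ := Complex.re_le_norm τ
      _ = 1 := hτ
  -- derivative of g at 0 is -2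
  have hdd : HasDerivAt (deriv f) 0 0 := by
    have h20 : deriv (deriv f) 0 = 0 := by
      rwa [iteratedDeriv_succ, iteratedDeriv_succ, iteratedDeriv_zero] at h2
    have := ((hfa.deriv 0 h0mem).differentiableAt).hasDerivAt
    rwa [h20] at this
  have hp : HasDerivAt (fun z : ℂ => (τ - z) * (1 - (starRingEnd ℂ) τ * z)) (-2) 0 := by
    have ha1 : HasDerivAt (fun z : ℂ => τ - z) (-1) 0 := by
      simpa using (hasDerivAt_id (0:ℂ)).const_sub τ
    have ha2 : HasDerivAt (fun z : ℂ => 1 - (starRingEnd ℂ) τ * z) (-((starRingEnd ℂ) τ)) 0 := by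
      simpa using ((hasDerivAt_id (0:ℂ)).const_mul ((starRingEnd ℂ) τ)).const_sub 1
    have := ha1.mul ha2
    refine this.congr_deriv (Eq.symm ?_)
    simp
    linear_combination hτ2
  have hgd0 : HasDerivAt g (-2) 0 := by
    have := hp.mul hdd
    refine this.congr_deriv (Eq.symm ?_)
    simp [h1]
  -- the Cayley transform φ
  have hden : ∀ z ∈ ball (0:ℂ) 1, g z + (starRingEnd ℂ) τ ≠ 0 := by
    intro z hz h
    have h1' : (g z + (starRingEnd ℂ) τ).re = (g z).re + τ.re := by
      simp [Complex.add_re, Complex.conj_re]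
    rw [h] at h1'
    have := hre z hz
    simp only [Complex.zero_re] at h1'
    linarith [this]
  set φ : ℂ → ℂ := fun z => (g z - τ) / (g z + (starRingEnd ℂ) τ) with hφdef
  have hφd : DifferentiableOn ℂ φ (ball 0 1) :=
    (hgd.sub_const τ).div (hgd.add_const _) hden
  have hφ0 : φ 0 = 0 := by simp [hφdef, hg0]
  have hmaps : MapsTo φ (ball 0 1) (ball (φ 0) 1) := by
    intro z hz
    rw [hφ0, mem_ball_zero_iff]
    have hd0 := hden z hz
    have habs : ‖g z - τ‖ < ‖g z + (starRingEnd ℂ) τ‖ := by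
      apply lt_of_pow_lt_pow_left₀ 2 (norm_nonneg _)
      rw [Complex.sq_norm, Complex.sq_norm]
      exact aux_normSq_lt ha (hre z hz)
    rw [hφdef]
    simp only [norm_div]
    rw [div_lt_one (lt_of_le_of_lt (norm_nonneg _) habs)]
    exact habs
  have hτden : τ + (starRingEnd ℂ) τ ≠ 0 := by
    intro h
    have : (τ + (starRingEnd ℂ) τ).re = 2 * τ.re := by
      simp [Complex.add_re, Complex.conj_re]; ring
    rw [h] at this
    simp at this
    linarith
  have hφd0 : HasDerivAt φ (-2 / (τ + (starRingEnd ℂ) τ)) 0 := by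
    have hnum : HasDerivAt (fun z => g z - τ) (-2) 0 := hgd0.sub_const τ
    have hden' : HasDerivAt (fun z => g z + (starRingEnd ℂ) τ) (-2) 0 := hgd0.add_const _
    have := hnum.div hden' (by rw [hg0]; exact hτden)
    refine this.congr_deriv (Eq.symm ?_)
    rw [hg0]
    field_simp
    ring
  have hnormφ : ‖(-2 / (τ + (starRingEnd ℂ) τ) : ℂ)‖ = 1 / τ.re := by
    have hr : ‖((2 * τ.re : ℝ) : ℂ)‖ = 2 * τ.re := by
      rw [Complex.norm_real, Real.norm_of_nonneg (by linarith)]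
    have h2n : ‖(-2 : ℂ)‖ = 2 := by norm_num
    rw [Complex.add_conj, norm_div, hr, h2n]
    field_simp
  -- Schwarz lemma at the center
  have key := Complex.norm_dslope_le_div_of_mapsTo_ball hφd (hmaps.mono_right ball_subset_closedBall) h0mem
  rw [dslope_same, hφd0.deriv, hnormφ] at key
  have haeq : τ.re = 1 := by
    have : 1 ≤ τ.re := by
      rw [div_le_iff₀ ha] at key
      · linarith [key]
    linarith
  have hτ1 : τ = 1 := by
    have hnsq : Complex.normSq τ = 1 := by
      rw [Complex.normSq_eq_norm_sq, hτ]; norm_num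
    have him : τ.im = 0 := by
      rw [Complex.normSq_apply, haeq] at hnsq
      nlinarith
    apply Complex.ext <;> simp [haeq, him]
  subst hτ1
  -- equality case
  have hcj : (starRingEnd ℂ) (1:ℂ) = 1 := by simp
  have hdsl : dslope φ 0 0 = -1 := by
    rw [dslope_same, hφd0.deriv, hcj]
    norm_num
  have heqOn := Complex.affine_of_mapsTo_ball_of_norm_dslope_eq_div hφd (hmaps.mono_right ball_subset_closedBall) h0mem
    (by rw [hdsl]; norm_num)
  have hφeq : ∀ z ∈ ball (0:ℂ) 1, φ z = -z := by
    intro z hz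
    have := heqOn hz
    rw [this, hφ0, hdsl]
    simp
  -- derive the formula for deriv f
  have hderiv : ∀ z ∈ ball (0:ℂ) 1, deriv f z = 1 / (1 - z ^ 2) := by
    intro z hz
    have hz1 : ‖z‖ < 1 := mem_ball_zero_iff.mp hz
    have h1z : (1:ℂ) - z ≠ 0 := by
      intro h
      have : z = 1 := by linear_combination -h
      rw [this] at hz1; simp at hz1
    have h2z : (1:ℂ) + z ≠ 0 := by
      intro h
      have : z = -1 := by linear_combination h
      rw [this] at hz1; simp at hz1
    have hzsq : (1:ℂ) - z ^ 2 ≠ 0 := by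
      intro h
      have : ((1:ℂ) - z) * (1 + z) = 0 := by linear_combination h
      rcases mul_eq_zero.mp this with h' | h'
      exacts [h1z h', h2z h']
    have hd0 := hden z hz
    rw [hcj] at hd0
    have hφz := hφeq z hz
    rw [hφdef] at hφz
    simp only [hcj] at hφz
    rw [div_eq_iff hd0] at hφz
    -- hφz : g z - 1 = -z * (g z + 1)
    have hgz : g z = (1 - z) * (1 - z) * deriv f z := by
      simp [hgdef, hcj]
    rw [hgz] at hφz
    have hkey : ((1:ℂ) - z) * ((1 - z ^ 2) * deriv f z - 1) = 0 := by
      linear_combination hφz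
    rcases mul_eq_zero.mp hkey with h' | h'
    · exact absurd h' h1z
    · field_simp
      linear_combination h'
  intro z hz
  refine ⟨hderiv z hz, ?_⟩
  -- antiderivative
  set F : ℂ → ℂ := fun w => (1/2 : ℂ) * Complex.log ((1 + w) / (1 - w)) with hFdef
  have hF : ∀ w ∈ ball (0:ℂ) 1, HasDerivAt F (1 / (1 - w ^ 2)) w := by
    intro w hw
    have hw1 : ‖w‖ < 1 := mem_ball_zero_iff.mp hw
    have hwn : Complex.normSq w < 1 := by
      rw [← Complex.sq_norm] at *
      nlinarith [norm_nonneg w]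
    have h1w : (1:ℂ) - w ≠ 0 := by
      intro h
      have : w = 1 := by linear_combination -h
      rw [this] at hw1; simp at hw1
    have h2w : (1:ℂ) + w ≠ 0 := by
      intro h
      have : w = -1 := by linear_combination h
      rw [this] at hw1; simp at hw1
    have hwsq : (1:ℂ) - w ^ 2 ≠ 0 := by
      intro h
      have : ((1:ℂ) - w) * (1 + w) = 0 := by linear_combination h
      rcases mul_eq_zero.mp this with h' | h'
      exacts [h1w h', h2w h']
    have hslit : (1 + w) / (1 - w) ∈ Complex.slitPlane := by
      rw [Complex.mem_slitPlane_iff]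
      left
      rw [Complex.div_re, ← add_div]
      apply div_pos
      · simp only [Complex.add_re, Complex.add_im, Complex.sub_re, Complex.sub_im,
          Complex.one_re, Complex.one_im]
        nlinarith [hwn, Complex.normSq_apply w]
      · rwa [Complex.normSq_pos]
    have hq : HasDerivAt (fun w : ℂ => (1 + w) / (1 - w)) (2 / (1 - w) ^ 2) w := by
      have hn : HasDerivAt (fun w : ℂ => 1 + w) 1 w := by
        simpa using (hasDerivAt_id w).const_add 1
      have hdn : HasDerivAt (fun w : ℂ => 1 - w) (-1) w := by
        simpa using (hasDerivAt_id w).const_sub 1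
      have := hn.div hdn h1w
      refine this.congr_deriv (Eq.symm ?_)
      field_simp
      ring
    have hlog := (Complex.hasDerivAt_log hslit).comp w hq
    have := hlog.const_mul (1/2 : ℂ)
    refine this.congr_deriv (Eq.symm ?_)
    have hdiv : (1 + w) / (1 - w) ≠ 0 := div_ne_zero h2w h1w
    field_simp
    ring
  -- constancy of f - F
  have hFd : DifferentiableOn ℂ F (ball 0 1) := fun w hw =>
    ((hF w hw).differentiableAt).differentiableWithinAt
  have hconst : ∀ w ∈ ball (0:ℂ) 1, f w - F w = f 0 - F 0 := by
    intro w hw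
    have hsub : DifferentiableOn ℂ (fun w => f w - F w) (ball 0 1) := hd.sub hFd
    have hzero : ∀ x ∈ ball (0:ℂ) 1, fderivWithin ℂ (fun w => f w - F w) (ball (0:ℂ) 1) x = 0 := by
      intro x hx
      have hfx : HasDerivAt f (deriv f x) x :=
        (hd.differentiableAt (isOpen_ball.mem_nhds hx)).hasDerivAt
      rw [hderiv x hx] at hfx
      have hsx : HasDerivAt (fun w => f w - F w) 0 x := by
        exact (hfx.sub (hF x hx)).congr_deriv (by simp)
      rw [fderivWithin_of_isOpen isOpen_ball hx]
      rw [hsx.hasFDerivAt.fderiv]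
      ext y
      simp
    exact (convex_ball (0:ℂ) 1).is_const_of_fderivWithin_eq_zero hsub hzero hw h0mem
  have hF0 : F 0 = 0 := by simp [hFdef]
  have := hconst z hz
  rw [h0, hF0] at this
  linear_combination this
end

section
/- Let h be holomorphic on the unit disk with h(0) = 1, Re h > 0, and |h'(0)| = 2. Then h(z) = (1 + λz)/(1 − λz) for some λ on the unit circle (namely λ = h'(0)/2). -/
open Complex Metric Set

theorem stmt_15 (h : ℂ → ℂ)
    (hd : DifferentiableOn ℂ h (Metric.ball 0 1))
    (h0 : h 0 = 1)
    (hre : ∀ z ∈ Metric.ball (0:ℂ) 1, 0 < (h z).re)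
    (hc : ‖deriv h 0‖ = 2) :
    ∃ l : ℂ, ‖l‖ = 1 ∧ l = deriv h 0 / 2 ∧
      ∀ z ∈ Metric.ball (0:ℂ) 1, h z = (1 + l * z) / (1 - l * z) := by
  set g : ℂ → ℂ := fun z => (h z - 1) / (h z + 1) with hg
  have hne : ∀ z ∈ ball (0:ℂ) 1, h z + 1 ≠ 0 := by
    intro z hz hz0
    have h1 := hre z hz
    have h2 : (h z + 1).re = 0 := by rw [hz0]; simp
    simp [Complex.add_re] at h2; linarith
  have hgd : DifferentiableOn ℂ g (ball 0 1) :=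
    DifferentiableOn.div (hd.sub (differentiableOn_const 1))
      (hd.add (differentiableOn_const 1)) hne
  have hg0 : g 0 = 0 := by simp [hg, h0]
  have hmaps : MapsTo g (ball 0 1) (ball (g 0) 1) := by
    rw [hg0]
    intro z hz
    rw [mem_ball_zero_iff]
    have h1 := hne z hz
    have hpos : 0 < ‖h z + 1‖ := norm_pos_iff.mpr h1
    rw [hg]
    simp only [norm_div]
    rw [div_lt_one hpos]
    have key : ‖h z - 1‖ ^ 2 < ‖h z + 1‖ ^ 2 := by
      rw [Complex.sq_norm, Complex.sq_norm]
      simp only [Complex.normSq_apply, Complex.sub_re, Complex.add_re, Complex.sub_im,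
        Complex.add_im, Complex.one_re, Complex.one_im]
      nlinarith [hre z hz]
    nlinarith [norm_nonneg (h z - 1)]
  have hda : DifferentiableAt ℂ h 0 :=
    hd.differentiableAt (Metric.ball_mem_nhds _ one_pos)
  have h2 : h 0 + 1 ≠ 0 := by rw [h0]; norm_num
  have H : HasDerivAt (fun z => (h z - 1) / (h z + 1))
      ((deriv h 0 * (h 0 + 1) - (h 0 - 1) * deriv h 0) / (h 0 + 1) ^ 2) 0 :=
    (hda.hasDerivAt.sub_const 1).div (hda.hasDerivAt.add_const 1) h2
  have hderiv : deriv g 0 = deriv h 0 / 2 := by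
    rw [hg, H.deriv, h0]; ring
  have hds : ‖dslope g 0 0‖ = 1 / 1 := by
    rw [dslope_same, hderiv]
    simp only [norm_div, hc]
    simp
  have heq := Complex.affine_of_mapsTo_ball_of_exists_norm_dslope_eq_div hgd (hmaps.mono_right ball_subset_closedBall)
    (mem_ball_self one_pos) hds
  refine ⟨deriv h 0 / 2, by rw [norm_div, hc]; norm_num, rfl, ?_⟩
  intro z hz
  have hzl := heq hz
  simp only [hg0, dslope_same, hderiv, sub_zero, zero_add, smul_eq_mul] at hzl
  set l := deriv h 0 / 2 with hl
  have hlz : ‖l * z‖ < 1 := by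
    rw [norm_mul]
    have hl1 : ‖l‖ = 1 := by rw [norm_div, hc]; norm_num
    rw [hl1, one_mul]
    simpa using mem_ball_zero_iff.mp hz
  have hlz1 : (1 : ℂ) - l * z ≠ 0 := by
    intro h'
    have : (1 : ℂ) = l * z := by linear_combination h'
    rw [← this] at hlz; simp at hlz
  have h1 := hne z hz
  rw [hg] at hzl
  field_simp at hzl
  field_simp
  linear_combination hzl
end

section
/- The function f(z) = z/(1+z²) on the unit disk, which is holomorphic and injective there with f(0)=0, f'(0)=1, f''(0)=0, does not belong to the Hardy space H^1, and its derivative f'(z) = (1−z²)/(1+z²)² does not belong to H^{1/2}. -/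
open Complex

private lemma hden {z : ℂ} (hz : ‖z‖ < 1) : (1 : ℂ) + z ^ 2 ≠ 0 := by
  intro h
  have hz2 : z ^ 2 = -1 := by linear_combination h
  have : ‖z ^ 2‖ = 1 := by rw [hz2]; simp
  rw [norm_pow] at this
  nlinarith [norm_nonneg z]

private lemma cos_fact (θ : ℝ) :
    (1:ℂ) + Complex.exp ((2*θ:ℝ)*I) = Complex.exp (↑θ*I) * (2 * Complex.cos ↑θ) := by
  rw [Complex.cos]
  have e1 : Complex.exp (↑θ*I) * Complex.exp (↑θ*I) = Complex.exp ((2*θ:ℝ)*I) := by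
    rw [← Complex.exp_add]; push_cast; ring_nf
  have e2 : Complex.exp (↑θ*I) * Complex.exp (-↑θ*I) = 1 := by
    rw [← Complex.exp_add]; ring_nf; exact Complex.exp_zero
  linear_combination -e1 - e2

private lemma sq_w (r θ : ℝ) :
    ((r:ℂ) * Complex.exp (↑θ*I)) ^ 2 = (r^2 : ℝ) * Complex.exp ((2*θ:ℝ)*I) := by
  rw [mul_pow, ← Complex.exp_nat_mul]
  push_cast
  ring_nf

private lemma abs_den_le (r θ : ℝ) (hr : 0 ≤ r) (hr1 : r ≤ 1) :
    ‖1 + ((r:ℂ) * Complex.exp (↑θ*I)) ^ 2‖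
      ≤ 2 * |Real.cos θ| + (1 - r^2) := by
  rw [sq_w]
  have hsplit : (1:ℂ) + (r^2:ℝ) * Complex.exp ((2*θ:ℝ)*I)
      = ((1:ℂ) + Complex.exp ((2*θ:ℝ)*I)) - ((1 - r^2 : ℝ)) * Complex.exp ((2*θ:ℝ)*I) := by
    push_cast; ring
  rw [hsplit]
  refine le_trans (norm_sub_le _ _) ?_
  have h1 : ‖(1:ℂ) + Complex.exp ((2*θ:ℝ)*I)‖ = 2 * |Real.cos θ| := by
    rw [cos_fact, norm_mul, Complex.norm_exp_ofReal_mul_I, norm_mul, ← Complex.ofReal_cos,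
      Complex.norm_real, Real.norm_eq_abs]
    simp
  have h2 : ‖((1 - r^2 : ℝ) : ℂ) * Complex.exp ((2*θ:ℝ)*I)‖ = 1 - r^2 := by
    rw [norm_mul, Complex.norm_exp_ofReal_mul_I, Complex.norm_real, Real.norm_eq_abs, mul_one, _root_.abs_of_nonneg]
    nlinarith
  rw [h1, h2]

private lemma abs_den_pos (r θ : ℝ) (hr : 0 ≤ r) (hr1 : r < 1) :
    0 < ‖1 + ((r:ℂ) * Complex.exp (↑θ*I)) ^ 2‖ := by
  have := hden (z := (r:ℂ) * Complex.exp (↑θ*I)) (by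
    rw [norm_mul, Complex.norm_exp_ofReal_mul_I, Complex.norm_real, Real.norm_eq_abs, mul_one]
    rwa [_root_.abs_of_nonneg hr])
  exact norm_pos_iff.mpr this

private lemma cos_abs_le {θ : ℝ} (hθ : Real.pi/2 ≤ θ) :
    |Real.cos θ| ≤ θ - Real.pi/2 := by
  calc |Real.cos θ| = |Real.sin (Real.pi/2 - θ)| := by rw [Real.sin_pi_div_two_sub]
    _ = |Real.sin (θ - Real.pi/2)| := by
        rw [show Real.pi/2 - θ = -(θ - Real.pi/2) by ring, Real.sin_neg, abs_neg]
    _ ≤ |θ - Real.pi/2| := Real.abs_sin_le_abs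
    _ = θ - Real.pi/2 := abs_of_nonneg (by linarith)

private lemma integral_inv_linear {a b ε : ℝ} (hab : a ≤ b) (hpos : 0 < 2*a - Real.pi + ε) :
    ∫ θ in a..b, (2*θ - Real.pi + ε)⁻¹
      = (fun x => (1/2) * Real.log (2*x - Real.pi + ε)) b
        - (fun x => (1/2) * Real.log (2*x - Real.pi + ε)) a := by
  have hcont : Continuous (fun θ : ℝ => 2*θ - Real.pi + ε) := by fun_prop
  have hne : ∀ x ∈ Set.uIcc a b, 2*x - Real.pi + ε ≠ 0 := by
    intro x hx
    rw [Set.uIcc_of_le hab] at hx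
    have := hx.1
    intro h; nlinarith
  apply intervalIntegral.integral_eq_sub_of_hasDerivAt
  · intro x hx
    have hlin : HasDerivAt (fun θ : ℝ => 2*θ - Real.pi + ε) 2 x := by
      simpa using (((hasDerivAt_id x).const_mul (2:ℝ)).sub_const Real.pi).add_const ε
    have hlog := (Real.hasDerivAt_log (hne x hx)).comp x hlin
    have := hlog.const_mul ((1:ℝ)/2)
    exact this.congr_deriv (by ring)
  · exact (hcont.continuousOn.inv₀ hne).intervalIntegrable

private lemma lower1 {r : ℝ} (hr : 1/2 ≤ r) (hr1 : r < 1) :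
    (1/4) * Real.log (1/(1 - r^2)) ≤
      ∫ θ in (0:ℝ)..(2*Real.pi),
        ‖((r:ℂ) * Complex.exp (↑θ*I)) / (1 + ((r:ℂ) * Complex.exp (↑θ*I))^2)‖ := by
  have hr0 : (0:ℝ) ≤ r := by linarith
  set ε : ℝ := 1 - r^2 with hε_def
  have hε : 0 < ε := by nlinarith
  have hε1 : ε ≤ 1 := by nlinarith
  have pi_pos := Real.pi_pos
  have pi_gt : (3:ℝ) < Real.pi := Real.pi_gt_three
  have habs_w : ∀ θ : ℝ, ‖(r:ℂ) * Complex.exp (↑θ*I)‖ = r := by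
    intro θ
    rw [norm_mul, Complex.norm_exp_ofReal_mul_I, Complex.norm_real, Real.norm_eq_abs, mul_one,
      _root_.abs_of_nonneg hr0]
  have habs_w1 : ∀ θ : ℝ, ‖(r:ℂ) * Complex.exp (↑θ*I)‖ < 1 := by
    intro θ; rw [habs_w]; exact hr1
  have hcont : Continuous (fun θ : ℝ =>
      ‖((r:ℂ) * Complex.exp (↑θ*I)) / (1 + ((r:ℂ) * Complex.exp (↑θ*I))^2)‖) := by
    apply continuous_norm.comp
    apply Continuous.div (by fun_prop) (by fun_prop)
    exact fun θ => hden (habs_w1 θ)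
  have hint : IntervalIntegrable (fun θ : ℝ =>
      ‖((r:ℂ) * Complex.exp (↑θ*I)) / (1 + ((r:ℂ) * Complex.exp (↑θ*I))^2)‖)
      MeasureTheory.volume 0 (2*Real.pi) := hcont.intervalIntegrable _ _
  have hgcont : ContinuousOn (fun θ : ℝ => r * (2*θ - Real.pi + ε)⁻¹)
      (Set.uIcc (Real.pi/2) Real.pi) := by
    apply continuousOn_const.mul
    apply ContinuousOn.inv₀ (by fun_prop)
    intro x hx
    rw [Set.uIcc_of_le (by linarith)] at hx
    have := hx.1
    intro h; nlinarith
  have hgint : IntervalIntegrable (fun θ : ℝ => r * (2*θ - Real.pi + ε)⁻¹)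
      MeasureTheory.volume (Real.pi/2) Real.pi := hgcont.intervalIntegrable
  have step2 : (∫ θ in (Real.pi/2)..Real.pi, r * (2*θ - Real.pi + ε)⁻¹) ≤
      ∫ θ in (Real.pi/2)..Real.pi,
        ‖((r:ℂ) * Complex.exp (↑θ*I)) / (1 + ((r:ℂ) * Complex.exp (↑θ*I))^2)‖ := by
    apply intervalIntegral.integral_mono_on (by linarith) hgint
      (hcont.intervalIntegrable _ _)
    intro θ hθ
    have hθ1 := hθ.1
    have hθ2 := hθ.2
    have hdle : ‖1 + ((r:ℂ) * Complex.exp (↑θ*I))^2‖ ≤ 2*θ - Real.pi + ε := by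
      refine le_trans (abs_den_le r θ hr0 (le_of_lt hr1)) ?_
      have := cos_abs_le hθ1
      rw [hε_def]; linarith
    have hdpos := abs_den_pos r θ hr0 hr1
    rw [norm_div, habs_w]
    rw [show r * (2*θ - Real.pi + ε)⁻¹ = r / (2*θ - Real.pi + ε) by rw [div_eq_mul_inv]]
    apply div_le_div_of_nonneg_left hr0 hdpos hdle
  have step1 : (∫ θ in (Real.pi/2)..Real.pi,
        ‖((r:ℂ) * Complex.exp (↑θ*I)) / (1 + ((r:ℂ) * Complex.exp (↑θ*I))^2)‖) ≤
      ∫ θ in (0:ℝ)..(2*Real.pi),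
        ‖((r:ℂ) * Complex.exp (↑θ*I)) / (1 + ((r:ℂ) * Complex.exp (↑θ*I))^2)‖ := by
    apply intervalIntegral.integral_mono_interval (by linarith) (by linarith) (by linarith)
      (Filter.Eventually.of_forall fun x => norm_nonneg _) hint
  have hval : (∫ θ in (Real.pi/2)..Real.pi, r * (2*θ - Real.pi + ε)⁻¹)
      = r * ((1/2) * Real.log (Real.pi + ε) - (1/2) * Real.log ε) := by
    rw [intervalIntegral.integral_const_mul,
      integral_inv_linear (by linarith) (by nlinarith)]
    simp only
    rw [show 2*Real.pi - Real.pi + ε = Real.pi + ε by ring,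
      show 2*(Real.pi/2) - Real.pi + ε = ε by ring]
  have hlogpi : 0 ≤ Real.log (Real.pi + ε) := Real.log_nonneg (by linarith)
  have hlogε : Real.log ε ≤ 0 := Real.log_nonpos (le_of_lt hε) hε1
  have hfin : (1/4) * Real.log (1/ε) ≤ r * ((1/2) * Real.log (Real.pi + ε) - (1/2) * Real.log ε) := by
    rw [show (1:ℝ)/ε = ε⁻¹ from one_div ε, Real.log_inv]
    nlinarith
  linarith [hval ▸ step2, step1, hfin]

private lemma lower2 {r : ℝ} (hr : 1/2 ≤ r) (hr1 : r < 1) :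
    (1/2) * Real.log (1/(1 - r^2)) ≤
      ∫ θ in (0:ℝ)..(2*Real.pi),
        (‖(1 - ((r:ℂ) * Complex.exp (↑θ*I))^2) /
          (1 + ((r:ℂ) * Complex.exp (↑θ*I))^2)^2‖) ^ ((1:ℝ)/2) := by
  have hr0 : (0:ℝ) ≤ r := by linarith
  set ε : ℝ := 1 - r^2 with hε_def
  have hε : 0 < ε := by nlinarith
  have hε1 : ε ≤ 1 := by nlinarith
  have pi_pos := Real.pi_pos
  have pi_gt : (3:ℝ) < Real.pi := Real.pi_gt_three
  have habs_w1 : ∀ θ : ℝ, ‖(r:ℂ) * Complex.exp (↑θ*I)‖ < 1 := by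
    intro θ
    rw [norm_mul, Complex.norm_exp_ofReal_mul_I, Complex.norm_real, Real.norm_eq_abs, mul_one,
      _root_.abs_of_nonneg hr0]
    exact hr1
  have hcont : Continuous (fun θ : ℝ =>
      (‖(1 - ((r:ℂ) * Complex.exp (↑θ*I))^2) /
        (1 + ((r:ℂ) * Complex.exp (↑θ*I))^2)^2‖) ^ ((1:ℝ)/2)) := by
    apply Continuous.rpow_const
    · apply continuous_norm.comp
      apply Continuous.div (by fun_prop) (by fun_prop)
      exact fun θ => pow_ne_zero 2 (hden (habs_w1 θ))
    · exact fun x => Or.inr (by norm_num)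
  have hint := hcont.intervalIntegrable (μ := MeasureTheory.volume) 0 (2*Real.pi)
  have hgcont : ContinuousOn (fun θ : ℝ => (2*θ - Real.pi + ε)⁻¹)
      (Set.uIcc (Real.pi/2) (3*Real.pi/4)) := by
    apply ContinuousOn.inv₀ (by fun_prop)
    intro x hx
    rw [Set.uIcc_of_le (by linarith)] at hx
    have := hx.1
    intro h; nlinarith
  have step2 : (∫ θ in (Real.pi/2)..(3*Real.pi/4), (2*θ - Real.pi + ε)⁻¹) ≤
      ∫ θ in (Real.pi/2)..(3*Real.pi/4),
        (‖(1 - ((r:ℂ) * Complex.exp (↑θ*I))^2) /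
          (1 + ((r:ℂ) * Complex.exp (↑θ*I))^2)^2‖) ^ ((1:ℝ)/2) := by
    apply intervalIntegral.integral_mono_on (by linarith) hgcont.intervalIntegrable
      (hcont.intervalIntegrable _ _)
    intro θ hθ
    have hθ1 := hθ.1
    have hθ2 := hθ.2
    set w : ℂ := (r:ℂ) * Complex.exp (↑θ*I) with hw
    have hdpos := abs_den_pos r θ hr0 hr1
    have hdle : ‖1 + w^2‖ ≤ 2*θ - Real.pi + ε := by
      refine le_trans (abs_den_le r θ hr0 (le_of_lt hr1)) ?_
      have := cos_abs_le hθ1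
      rw [hε_def]; linarith
    have hnum : (1:ℝ) ≤ ‖1 - w^2‖ := by
      have hre : (1 - w^2).re = 1 - r^2 * Real.cos (2*θ) := by
        rw [hw, sq_w]
        simp only [Complex.sub_re, Complex.one_re, Complex.re_ofReal_mul,
          Complex.exp_ofReal_mul_I_re]
      have hcos : Real.cos (2*θ) ≤ 0 :=
        Real.cos_nonpos_of_pi_div_two_le_of_le (by linarith) (by linarith)
      calc (1:ℝ) ≤ 1 - r^2 * Real.cos (2*θ) := by nlinarith
        _ = (1 - w^2).re := hre.symm
        _ ≤ |(1 - w^2).re| := le_abs_self _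
        _ ≤ ‖1 - w^2‖ := Complex.abs_re_le_norm _
    have hb : (0:ℝ) < 2*θ - Real.pi + ε := by nlinarith
    have key : ((‖1 + w^2‖)⁻¹) ^ (2:ℕ) ≤
        ‖(1 - w^2) / (1 + w^2)^2‖ := by
      rw [norm_div, norm_pow]
      rw [inv_pow, inv_eq_one_div, div_le_div_iff₀ (by positivity) (by positivity)]
      nlinarith [pow_pos hdpos 2]
    have hrpow : (((‖1 + w^2‖)⁻¹ ^ (2:ℕ) : ℝ)) ^ ((1:ℝ)/2)
        = (‖1 + w^2‖)⁻¹ := by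
      rw [← Real.rpow_natCast ((‖1 + w^2‖)⁻¹) 2,
        ← Real.rpow_mul (by positivity)]
      norm_num
    calc (2*θ - Real.pi + ε)⁻¹ ≤ (‖1 + w^2‖)⁻¹ :=
          inv_anti₀ hdpos hdle
      _ = (((‖1 + w^2‖)⁻¹ ^ (2:ℕ) : ℝ)) ^ ((1:ℝ)/2) := hrpow.symm
      _ ≤ (‖(1 - w^2) / (1 + w^2)^2‖) ^ ((1:ℝ)/2) :=
          Real.rpow_le_rpow (by positivity) key (by norm_num)
  have step1 : (∫ θ in (Real.pi/2)..(3*Real.pi/4),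
        (‖(1 - ((r:ℂ) * Complex.exp (↑θ*I))^2) /
          (1 + ((r:ℂ) * Complex.exp (↑θ*I))^2)^2‖) ^ ((1:ℝ)/2)) ≤
      ∫ θ in (0:ℝ)..(2*Real.pi),
        (‖(1 - ((r:ℂ) * Complex.exp (↑θ*I))^2) /
          (1 + ((r:ℂ) * Complex.exp (↑θ*I))^2)^2‖) ^ ((1:ℝ)/2) := by
    apply intervalIntegral.integral_mono_interval (by linarith) (by linarith) (by linarith)
      (Filter.Eventually.of_forall fun x => Real.rpow_nonneg (norm_nonneg _) _) hint
  have hval : (∫ θ in (Real.pi/2)..(3*Real.pi/4), (2*θ - Real.pi + ε)⁻¹)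
      = (1/2) * Real.log (Real.pi/2 + ε) - (1/2) * Real.log ε := by
    rw [integral_inv_linear (by linarith) (by nlinarith)]
    simp only
    rw [show 2*(3*Real.pi/4) - Real.pi + ε = Real.pi/2 + ε by ring,
      show 2*(Real.pi/2) - Real.pi + ε = ε by ring]
  have hlogpi : 0 ≤ Real.log (Real.pi/2 + ε) := Real.log_nonneg (by linarith)
  have hlogε : Real.log ε ≤ 0 := Real.log_nonpos (le_of_lt hε) hε1
  have hfin : (1/2) * Real.log (1/ε) ≤ (1/2) * Real.log (Real.pi/2 + ε) - (1/2) * Real.log ε := by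
    rw [show (1:ℝ)/ε = ε⁻¹ from one_div ε, Real.log_inv]
    nlinarith
  linarith [hval ▸ step2, step1, hfin]

theorem stmt_19 :
    DifferentiableOn ℂ (fun z : ℂ => z / (1 + z ^ 2)) (Metric.ball 0 1) ∧
    Set.InjOn (fun z : ℂ => z / (1 + z ^ 2)) (Metric.ball 0 1) ∧
    (fun z : ℂ => z / (1 + z ^ 2)) 0 = 0 ∧
    deriv (fun z : ℂ => z / (1 + z ^ 2)) 0 = 1 ∧
    iteratedDeriv 2 (fun z : ℂ => z / (1 + z ^ 2)) 0 = 0 ∧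
    (∀ z ∈ Metric.ball (0:ℂ) 1,
      deriv (fun z : ℂ => z / (1 + z ^ 2)) z = (1 - z ^ 2) / (1 + z ^ 2) ^ 2) ∧
    ¬ InHardy 1 (fun z : ℂ => z / (1 + z ^ 2)) ∧
    ¬ InHardy (1/2) (fun z : ℂ => (1 - z ^ 2) / (1 + z ^ 2) ^ 2) := by
  have hball : ∀ z ∈ Metric.ball (0:ℂ) 1, ‖z‖ < 1 := by
    intro z hz
    simpa [Complex.dist_eq] using Metric.mem_ball.mp hz
  -- part 1
  have part1 : DifferentiableOn ℂ (fun z : ℂ => z / (1 + z ^ 2)) (Metric.ball 0 1) := by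
    apply DifferentiableOn.div differentiableOn_id
    · exact (differentiableOn_const 1).add (differentiable_pow 2).differentiableOn
    · exact fun z hz => hden (hball z hz)
  -- part 6
  have part6 : ∀ z ∈ Metric.ball (0:ℂ) 1,
      deriv (fun z : ℂ => z / (1 + z ^ 2)) z = (1 - z ^ 2) / (1 + z ^ 2) ^ 2 := by
    intro z hz
    have h2 : HasDerivAt (fun z : ℂ => 1 + z ^ 2) (2 * z) z := by
      simpa using ((hasDerivAt_pow 2 z).const_add 1)
    have hd : HasDerivAt (fun z : ℂ => z / (1 + z ^ 2))
        ((1 * (1 + z ^ 2) - z * (2 * z)) / (1 + z ^ 2) ^ 2) z := by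
      simpa using (hasDerivAt_id z).fun_div h2 (hden (hball z hz))
    rw [hd.deriv, show (1 : ℂ) * (1 + z ^ 2) - z * (2 * z) = 1 - z ^ 2 by ring]
  -- part 2
  have part2 : Set.InjOn (fun z : ℂ => z / (1 + z ^ 2)) (Metric.ball 0 1) := by
    intro z hz w hw heq
    simp only at heq
    rw [div_eq_div_iff (hden (hball z hz)) (hden (hball w hw))] at heq
    have hfact : (z - w) * (1 - z * w) = 0 := by linear_combination heq
    rcases mul_eq_zero.mp hfact with h | h
    · exact sub_eq_zero.mp h
    · exfalso
      have hzw : z * w = 1 := by linear_combination -h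
      have : ‖z * w‖ = 1 := by rw [hzw]; simp
      rw [norm_mul] at this
      have h1 := hball z hz
      have h2 := hball w hw
      nlinarith [norm_nonneg z, norm_nonneg w]
  -- part 3
  have part3 : (fun z : ℂ => z / (1 + z ^ 2)) 0 = 0 := by simp
  -- part 4
  have part4 : deriv (fun z : ℂ => z / (1 + z ^ 2)) 0 = 1 := by
    rw [part6 0 (Metric.mem_ball_self one_pos)]
    norm_num
  -- part 5
  have part5 : iteratedDeriv 2 (fun z : ℂ => z / (1 + z ^ 2)) 0 = 0 := by
    have h2 : HasDerivAt (fun z : ℂ => z ^ 2) 0 0 := by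
      simpa using hasDerivAt_pow 2 (0:ℂ)
    have hnum : HasDerivAt (fun z : ℂ => 1 - z ^ 2) (0:ℂ) 0 := by
      simpa using (hasDerivAt_const (0:ℂ) (1:ℂ)).fun_sub h2
    have hbase : HasDerivAt (fun z : ℂ => 1 + z ^ 2) (0:ℂ) 0 := by
      simpa using h2.const_add (1:ℂ)
    have hden2 : HasDerivAt (fun z : ℂ => (1 + z ^ 2) ^ 2) (0:ℂ) 0 := by
      simpa using hbase.fun_pow 2
    have hne : ((1:ℂ) + (0:ℂ) ^ 2) ^ 2 ≠ 0 := by norm_num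
    have hg0 : HasDerivAt (fun z : ℂ => (1 - z ^ 2) / (1 + z ^ 2) ^ 2) 0 0 := by
      simpa using hnum.fun_div hden2 hne
    have heq : deriv (fun z : ℂ => z / (1 + z ^ 2))
        =ᶠ[nhds (0:ℂ)] (fun z : ℂ => (1 - z ^ 2) / (1 + z ^ 2) ^ 2) := by
      filter_upwards [Metric.ball_mem_nhds (0:ℂ) one_pos] with z hz using part6 z hz
    rw [iteratedDeriv_succ, iteratedDeriv_one, heq.deriv_eq]
    exact hg0.deriv
  -- part 7
  have part7 : ¬ InHardy 1 (fun z : ℂ => z / (1 + z ^ 2)) := by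
    rintro ⟨-, C, hC⟩
    have hC0 : (0:ℝ) ≤ C := by
      have h0 := hC 0 le_rfl one_pos
      simpa using h0
    set ε₀ : ℝ := Real.exp (-(4*C+4)) with hε₀def
    have hε₀pos : 0 < ε₀ := Real.exp_pos _
    have hε₀lt : ε₀ ≤ 3/4 := by
      have h1 : ε₀ ≤ Real.exp (-4) := Real.exp_le_exp.mpr (by linarith)
      have h2 : Real.exp (-4) = 1 / Real.exp 4 := by rw [Real.exp_neg]; ring
      have h3 : (5:ℝ) ≤ Real.exp 4 := by
        have := Real.add_one_le_exp (4:ℝ); linarith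
      have h4 : Real.exp (-4) ≤ 1/5 := by
        rw [h2]; rw [div_le_div_iff₀ (Real.exp_pos 4) (by norm_num)]; linarith
      linarith
    set r : ℝ := Real.sqrt (1 - ε₀) with hrdef
    have hr0 : 0 ≤ r := Real.sqrt_nonneg _
    have hrsq : r ^ 2 = 1 - ε₀ := Real.sq_sqrt (by linarith)
    have hr1 : r < 1 := by nlinarith
    have hrhalf : 1/2 ≤ r := by nlinarith
    have hlow := lower1 hrhalf hr1
    have hup := hC r hr0 hr1
    simp only [Real.rpow_one] at hup
    rw [hrsq, show (1:ℝ) - (1 - ε₀) = ε₀ by ring] at hlow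
    rw [show (1:ℝ)/ε₀ = Real.exp (4*C+4) by rw [hε₀def, Real.exp_neg, one_div, inv_inv],
      Real.log_exp] at hlow
    linarith
  -- part 8
  have part8 : ¬ InHardy (1/2) (fun z : ℂ => (1 - z ^ 2) / (1 + z ^ 2) ^ 2) := by
    rintro ⟨-, C, hC⟩
    have hC0 : (0:ℝ) ≤ C := by
      have h0 := hC 0 le_rfl one_pos
      simp [Real.one_rpow] at h0
      linarith [Real.pi_pos]
    set ε₀ : ℝ := Real.exp (-(4*C+4)) with hε₀def
    have hε₀pos : 0 < ε₀ := Real.exp_pos _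
    have hε₀lt : ε₀ ≤ 3/4 := by
      have h1 : ε₀ ≤ Real.exp (-4) := Real.exp_le_exp.mpr (by linarith)
      have h2 : Real.exp (-4) = 1 / Real.exp 4 := by rw [Real.exp_neg]; ring
      have h3 : (5:ℝ) ≤ Real.exp 4 := by
        have := Real.add_one_le_exp (4:ℝ); linarith
      have h4 : Real.exp (-4) ≤ 1/5 := by
        rw [h2]; rw [div_le_div_iff₀ (Real.exp_pos 4) (by norm_num)]; linarith
      linarith
    set r : ℝ := Real.sqrt (1 - ε₀) with hrdef
    have hr0 : 0 ≤ r := Real.sqrt_nonneg _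
    have hrsq : r ^ 2 = 1 - ε₀ := Real.sq_sqrt (by linarith)
    have hr1 : r < 1 := by nlinarith
    have hrhalf : 1/2 ≤ r := by nlinarith
    have hlow := lower2 hrhalf hr1
    have hup := hC r hr0 hr1
    rw [hrsq, show (1:ℝ) - (1 - ε₀) = ε₀ by ring] at hlow
    rw [show (1:ℝ)/ε₀ = Real.exp (4*C+4) by rw [hε₀def, Real.exp_neg, one_div, inv_inv],
      Real.log_exp] at hlow
    simp only at hup
    linarith
  exact ⟨part1, part2, part3, part4, part5, part6, part7, part8⟩
end
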